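/- arXiv:2205.12167 — 6 statements merged into one kernel-verified Lean document; each statement's English description precedes it below -/
import Mathlib

section
/- Let Φ₁ be a Carathéodory solution with data (s₁,x₁) and Φ₂ a Carathéodory solution with data (s₂,x₂), where s₁, s₂ ∈ [t0,T] with s₁ ≤ s₂. Then for every t ∈ [s₂,T], |Φ₁(t) − Φ₂(t)| ≤ (|x₁ − x₂| + m·|s₁ − s₂|) · e^(L·(t − s₂)). -/
/-!
For `t ∈ [s₂, T]`, `Φ₁ t - Φ₂ t` is `x₁ - x₂`, plus the integral of `G r (Φ₁ r)` over `[s₁, s₂]`,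
which is at most `m * |s₁ - s₂|`, plus the integral of `G r (Φ₁ r) - G r (Φ₂ r)` over `[s₂, t]`,
which the Lipschitz bound controls by `L * ∫ |Φ₁ - Φ₂|`. Grönwall's inequality in integral form
turns this into the exponential estimate; it follows from the differential Grönwall inequality
applied to the primitive `u ↦ ∫ r in s₂..u, |Φ₁ r - Φ₂ r|`.
-/

open MeasureTheory Set

/-- A Carathéodory solution on `[t0, T]` with data `(s, x)`. -/
def IsCaratheodorySol (t0 T : ℝ) (G : ℝ → ℝ → ℝ) (s x : ℝ) (Φ : ℝ → ℝ) : Prop :=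
  ContinuousOn Φ (Icc t0 T) ∧
    ∀ t ∈ Icc t0 T, Φ t = x + ∫ r in s..t, G r (Φ r)

open Filter Topology

theorem ContinuousOn.hasDerivWithinAt_integral_Ici {w : ℝ → ℝ} {a b t : ℝ}
    (hw : ContinuousOn w (Icc a b)) (ht : t ∈ Ico a b) :
    HasDerivWithinAt (fun u => ∫ r in a..u, w r) (w t) (Ici t) t := by
  have hnhds : Icc a b ∈ 𝓝[>] t :=
    ordConnected_Icc.mem_nhdsGT (Ico_subset_Icc_self ht)
      (right_mem_Icc.2 (ht.1.trans ht.2.le)) ht.2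
  exact intervalIntegral.integral_hasDerivWithinAt_right
    ((hw.mono (Icc_subset_Icc_right ht.2.le)).intervalIntegrable_of_Icc ht.1)
    ((hw.stronglyMeasurableAtFilter_nhdsWithin measurableSet_Icc t).filter_mono
      (nhdsWithin_le_of_mem hnhds))
    ((hw t (Ico_subset_Icc_self ht)).mono_of_mem_nhdsWithin hnhds)

theorem add_mul_gronwallBound_zero (δ L x : ℝ) :
    δ + L * gronwallBound 0 L δ x = δ * Real.exp (L * x) := by
  rcases eq_or_ne L 0 with rfl | hL
  · simp
  · rw [gronwallBound_of_K_ne_0 hL]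
    field_simp
    ring

theorem le_mul_exp_of_le_add_mul_integral {w : ℝ → ℝ} {a b δ L : ℝ} (hL : 0 ≤ L)
    (hw : ContinuousOn w (Icc a b)) (h : ∀ t ∈ Icc a b, w t ≤ δ + L * ∫ r in a..t, w r) :
    ∀ t ∈ Icc a b, w t ≤ δ * Real.exp (L * (t - a)) := by
  intro t ht
  have hab : a ≤ b := ht.1.trans ht.2
  have hprim : ContinuousOn (fun u => ∫ r in a..u, w r) (Icc a b) := by
    simpa only [uIcc_of_le hab] using
      intervalIntegral.continuousOn_primitive_interval (hw.integrableOn_Icc.mono_set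
        (uIcc_of_le hab).subset)
  have hprim_le : ∀ u ∈ Icc a b, ∫ r in a..u, w r ≤ gronwallBound 0 L δ (u - a) :=
    le_gronwallBound_of_liminf_deriv_right_le hprim
      (fun u hu _ hr => (hw.hasDerivWithinAt_integral_Ici hu).liminf_right_slope_le hr)
      (by simp) (fun u hu => by linarith [h u (Ico_subset_Icc_self hu)])
  calc w t ≤ δ + L * ∫ r in a..t, w r := h t ht
    _ ≤ δ + L * gronwallBound 0 L δ (t - a) := by gcongr; exact hprim_le t ht
    _ = δ * Real.exp (L * (t - a)) := add_mul_gronwallBound_zero δ L (t - a)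

section Caratheodory

variable {G : ℝ → ℝ → ℝ} {s : Set ℝ} {μ : Measure ℝ}

theorem aestronglyMeasurable_comp_of_caratheodory (hmeas : ∀ x, Measurable fun t => G t x)
    (hcont : ∀ t ∈ s, Continuous (G t)) (hs : MeasurableSet s) {Φ : ℝ → ℝ}
    (hΦ : AEMeasurable Φ (μ.restrict s)) :
    AEStronglyMeasurable (fun r => G r (Φ r)) (μ.restrict s) := by
  -- Changing `G` off `s` makes it continuous in `x` for every `t`, hence jointly measurable.
  set G' : ℝ → ℝ → ℝ := fun t x => s.indicator (fun t => G t x) t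
  have hG' : Measurable (Function.uncurry fun x t => G' t x) := by
    refine measurable_uncurry_of_continuous_of_measurable (fun t => ?_)
      (fun x => (hmeas x).indicator hs)
    by_cases ht : t ∈ s
    · simpa [G', ht] using hcont t ht
    · simpa [G', ht] using continuous_const
  have heq : (fun r => G' r (Φ r)) =ᵐ[μ.restrict s] fun r => G r (Φ r) := by
    filter_upwards [ae_restrict_mem hs] with r hr
    exact indicator_of_mem hr _
  exact ((hG'.comp_aemeasurable (hΦ.prodMk aemeasurable_id)).congr heq).aestronglyMeasurable

variable {t0 T m : ℝ}

theorem intervalIntegrable_comp_of_caratheodory (hmeas : ∀ x, Measurable fun t => G t x)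
    (hcont : ∀ t ∈ Icc t0 T, Continuous (G t)) (hbound : ∀ t ∈ Icc t0 T, ∀ x, |G t x| ≤ m)
    {Φ : ℝ → ℝ} (hΦ : ContinuousOn Φ (Icc t0 T)) {a b : ℝ} (ha : a ∈ Icc t0 T)
    (hb : b ∈ Icc t0 T) : IntervalIntegrable (fun r => G r (Φ r)) volume a b := by
  have hint : IntegrableOn (fun r => G r (Φ r)) (Icc t0 T) :=
    Integrable.mono' (integrable_const m)
      (aestronglyMeasurable_comp_of_caratheodory hmeas hcont measurableSet_Icc
        (hΦ.aemeasurable measurableSet_Icc))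
      ((ae_restrict_mem measurableSet_Icc).mono fun r hr => hbound r hr (Φ r))
  exact (hint.mono_set (uIcc_subset_Icc ha hb)).intervalIntegrable

theorem abs_integral_comp_le_of_abs_le (hbound : ∀ t ∈ Icc t0 T, ∀ x, |G t x| ≤ m)
    (Φ : ℝ → ℝ) {a b : ℝ} (ha : a ∈ Icc t0 T) (hb : b ∈ Icc t0 T) :
    |∫ r in a..b, G r (Φ r)| ≤ m * |b - a| :=
  intervalIntegral.norm_integral_le_of_norm_le_const (f := fun r => G r (Φ r)) fun r hr =>
    hbound r (uIcc_subset_Icc ha hb (uIoc_subset_uIcc hr)) (Φ r)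

theorem abs_integral_sub_comp_le {L : ℝ}
    (hlip : ∀ t ∈ Icc t0 T, ∀ x y, |G t x - G t y| ≤ L * |x - y|) {Φ₁ Φ₂ : ℝ → ℝ}
    (hΦ₁ : ContinuousOn Φ₁ (Icc t0 T)) (hΦ₂ : ContinuousOn Φ₂ (Icc t0 T)) {a b : ℝ}
    (ha : a ∈ Icc t0 T) (hb : b ∈ Icc t0 T) (hab : a ≤ b) :
    |∫ r in a..b, (G r (Φ₁ r) - G r (Φ₂ r))| ≤ L * ∫ r in a..b, |Φ₁ r - Φ₂ r| := by
  rw [← intervalIntegral.integral_const_mul]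
  refine intervalIntegral.norm_integral_le_of_norm_le
    (f := fun r => G r (Φ₁ r) - G r (Φ₂ r)) hab (Eventually.of_forall fun r hr => hlip r ?_ _ _) ?_
  · exact uIcc_subset_Icc ha hb (uIoc_subset_uIcc (uIoc_of_le hab ▸ hr))
  · exact ((hΦ₁.sub hΦ₂).abs.mono (uIcc_subset_Icc ha hb)).intervalIntegrable.const_mul L

theorem IsCaratheodorySol.sub_eq (hmeas : ∀ x, Measurable fun t => G t x)
    (hcont : ∀ t ∈ Icc t0 T, Continuous (G t)) (hbound : ∀ t ∈ Icc t0 T, ∀ x, |G t x| ≤ m)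
    {s₁ s₂ x₁ x₂ : ℝ} {Φ₁ Φ₂ : ℝ → ℝ} (hΦ₁ : IsCaratheodorySol t0 T G s₁ x₁ Φ₁)
    (hΦ₂ : IsCaratheodorySol t0 T G s₂ x₂ Φ₂) (hs₁ : s₁ ∈ Icc t0 T) (hs₂ : s₂ ∈ Icc t0 T)
    {t : ℝ} (ht : t ∈ Icc t0 T) :
    Φ₁ t - Φ₂ t =
      x₁ - x₂ + (∫ r in s₁..s₂, G r (Φ₁ r)) + ∫ r in s₂..t, (G r (Φ₁ r) - G r (Φ₂ r)) := by
  have hint₁ {a b : ℝ} (ha : a ∈ Icc t0 T) (hb : b ∈ Icc t0 T) :=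
    intervalIntegrable_comp_of_caratheodory hmeas hcont hbound hΦ₁.1 ha hb
  have hint₂ := intervalIntegrable_comp_of_caratheodory hmeas hcont hbound hΦ₂.1 hs₂ ht
  rw [hΦ₁.2 t ht, hΦ₂.2 t ht, intervalIntegral.integral_sub (hint₁ hs₂ ht) hint₂,
    ← intervalIntegral.integral_add_adjacent_intervals (hint₁ hs₁ hs₂) (hint₁ hs₂ ht)]
  ring

theorem IsCaratheodorySol.abs_sub_le_add_mul_integral (hmeas : ∀ x, Measurable fun t => G t x)
    (hcont : ∀ t ∈ Icc t0 T, Continuous (G t)) (hbound : ∀ t ∈ Icc t0 T, ∀ x, |G t x| ≤ m)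
    {L : ℝ} (hlip : ∀ t ∈ Icc t0 T, ∀ x y, |G t x - G t y| ≤ L * |x - y|)
    {s₁ s₂ x₁ x₂ : ℝ} {Φ₁ Φ₂ : ℝ → ℝ} (hΦ₁ : IsCaratheodorySol t0 T G s₁ x₁ Φ₁)
    (hΦ₂ : IsCaratheodorySol t0 T G s₂ x₂ Φ₂) (hs₁ : s₁ ∈ Icc t0 T) (hs₂ : s₂ ∈ Icc t0 T)
    {t : ℝ} (ht : t ∈ Icc s₂ T) :
    |Φ₁ t - Φ₂ t| ≤ |x₁ - x₂| + m * |s₁ - s₂| + L * ∫ r in s₂..t, |Φ₁ r - Φ₂ r| := by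
  have htT : t ∈ Icc t0 T := ⟨hs₂.1.trans ht.1, ht.2⟩
  rw [hΦ₁.sub_eq hmeas hcont hbound hΦ₂ hs₁ hs₂ htT, abs_sub_comm s₁]
  refine (abs_add_three _ _ _).trans ?_
  gcongr
  · exact abs_integral_comp_le_of_abs_le hbound Φ₁ hs₁ hs₂
  · exact abs_integral_sub_comp_le hlip hΦ₁.1 hΦ₂.1 hs₂ htT ht.1

end Caratheodory

theorem caratheodory_stability_general
    (t0 T : ℝ) (G : ℝ → ℝ → ℝ)
    (hmeas : ∀ x : ℝ, Measurable fun t => G t x)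
    (m : ℝ) (hbound : ∀ t ∈ Icc t0 T, ∀ x : ℝ, |G t x| ≤ m)
    (L : ℝ) (hL : 0 ≤ L)
    (hlip : ∀ t ∈ Icc t0 T, ∀ x y : ℝ, |G t x - G t y| ≤ L * |x - y|)
    (s₁ s₂ x₁ x₂ : ℝ) (hs₁ : s₁ ∈ Icc t0 T) (hs₂ : s₂ ∈ Icc t0 T)
    (Φ₁ Φ₂ : ℝ → ℝ)
    (hΦ₁ : IsCaratheodorySol t0 T G s₁ x₁ Φ₁)
    (hΦ₂ : IsCaratheodorySol t0 T G s₂ x₂ Φ₂) :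
    ∀ t ∈ Icc s₂ T,
      |Φ₁ t - Φ₂ t| ≤ (|x₁ - x₂| + m * |s₁ - s₂|) * Real.exp (L * (t - s₂)) := by
  have hcont (t : ℝ) (ht : t ∈ Icc t0 T) : Continuous (G t) :=
    (LipschitzWith.of_dist_le_mul (K := L.toNNReal) fun x y => by
      simpa only [Real.dist_eq, Real.coe_toNNReal L hL] using hlip t ht x y).continuous
  have hdist : ContinuousOn (fun r => |Φ₁ r - Φ₂ r|) (Icc s₂ T) :=
    (hΦ₁.1.sub hΦ₂.1).abs.mono (Icc_subset_Icc_left hs₂.1)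
  exact le_mul_exp_of_le_add_mul_integral hL hdist fun t ht =>
    hΦ₁.abs_sub_le_add_mul_integral hmeas hcont hbound hlip hΦ₂ hs₁ hs₂ ht

/-- Stability estimate for Carathéodory solutions with respect to their data:
`|Φ₁ t - Φ₂ t| ≤ (|x₁ - x₂| + m |s₁ - s₂|) e^{L (t - s₂)}` for `t ∈ [s₂, T]`. -/
theorem caratheodory_stability
    (t0 T : ℝ) (ht : t0 < T) (G : ℝ → ℝ → ℝ)
    (hmeas : ∀ x : ℝ, Measurable fun t => G t x)
    (m : ℝ) (hm : 0 ≤ m) (hbound : ∀ t ∈ Icc t0 T, ∀ x : ℝ, |G t x| ≤ m)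
    (L : ℝ) (hL : 0 ≤ L)
    (hlip : ∀ t ∈ Icc t0 T, ∀ x y : ℝ, |G t x - G t y| ≤ L * |x - y|)
    (s₁ s₂ x₁ x₂ : ℝ) (hs₁ : s₁ ∈ Icc t0 T) (hs₂ : s₂ ∈ Icc t0 T) (hs : s₁ ≤ s₂)
    (Φ₁ Φ₂ : ℝ → ℝ)
    (hΦ₁ : IsCaratheodorySol t0 T G s₁ x₁ Φ₁)
    (hΦ₂ : IsCaratheodorySol t0 T G s₂ x₂ Φ₂) :
    ∀ t ∈ Icc s₂ T,
      |Φ₁ t - Φ₂ t| ≤ (|x₁ - x₂| + m * |s₁ - s₂|) * Real.exp (L * (t - s₂)) :=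
  caratheodory_stability_general t0 T G hmeas m hbound L hL hlip s₁ s₂ x₁ x₂ hs₁ hs₂ Φ₁ Φ₂ hΦ₁ hΦ₂
end

section
/- Let Φ : [t0,T] × [t0,T] × ℝ → ℝ be a function such that for every (s,x), the map t ↦ Φ(t,s,x) is a Carathéodory solution with data (s,x). If x₁ < x₂ and s ∈ [t0,T], then Φ(t,s,x₁) < Φ(t,s,x₂) for every t ∈ [t0,T]; that is, distinct characteristic curves never intersect. -/
/-!
If two solutions meet at some time, their difference `u` satisfies `u c = ∫ g` from the meeting
time `b` with `|g| ≤ L |u|`, so the maximum of `|u|` over an interval `[[b, r]]` with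
`L |r - b| < 1` is at most `L |r - b|` times itself and hence zero. A zero of `u` thus spreads
to a neighbourhood, and by connectedness of `[t0, T]` the solutions coincide. Now
`u s = x₂ - x₁ > 0`, so if `u t ≤ 0` the intermediate value theorem produces a meeting time and
`x₁ = x₂`.
-/

open MeasureTheory Set

open Filter Topology TopologicalSpace

/- A Carathéodory function is replaced by one that is continuous in the state for *every* time,
so that it becomes jointly measurable. -/
theorem aemeasurable_restrict_comp_of_measurable_of_continuous {α E F : Type*}
    [MeasurableSpace α] [TopologicalSpace E] [MetrizableSpace E] [MeasurableSpace E]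
    [SecondCountableTopology E] [OpensMeasurableSpace E] [TopologicalSpace F]
    [PseudoMetrizableSpace F] [MeasurableSpace F] [BorelSpace F] [Zero F]
    {G : α → E → F} {s : Set α} (hs : MeasurableSet s) {μ : Measure α}
    (hmeas : ∀ x, Measurable fun t => G t x) (hcont : ∀ t ∈ s, Continuous (G t))
    {φ : α → E} (hφ : AEMeasurable φ (μ.restrict s)) :
    AEMeasurable (fun t => G t (φ t)) (μ.restrict s) := by
  classical
  set G' : α → E → F := fun t y => if t ∈ s then G t y else 0
  have hG' : Measurable (Function.uncurry fun y t => G' t y) :=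
    measurable_uncurry_of_continuous_of_measurable
      (fun t => by by_cases ht : t ∈ s <;> simp [G', ht, hcont t, continuous_const])
      (fun y => Measurable.ite hs (hmeas y) measurable_const)
  refine (hG'.comp_aemeasurable (hφ.prodMk aemeasurable_id)).congr ?_
  filter_upwards [ae_restrict_mem hs] with t ht
  simp [G', ht]

theorem integrableOn_Icc_comp_of_abs_le {G : ℝ → ℝ → ℝ} {φ : ℝ → ℝ} {a b m : ℝ}
    (hmeas : ∀ x, Measurable fun t => G t x) (hcont : ∀ t ∈ Icc a b, Continuous (G t))
    (hbound : ∀ t ∈ Icc a b, ∀ x, |G t x| ≤ m) (hφ : ContinuousOn φ (Icc a b)) :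
    IntegrableOn (fun t => G t (φ t)) (Icc a b) := by
  refine Integrable.mono' (g := fun _ => m) (integrableOn_const measure_Icc_lt_top.ne)
    (aemeasurable_restrict_comp_of_measurable_of_continuous measurableSet_Icc hmeas hcont
      (hφ.aemeasurable measurableSet_Icc)).aestronglyMeasurable ?_
  filter_upwards [ae_restrict_mem measurableSet_Icc] with t ht
  rw [Real.norm_eq_abs]
  exact hbound t ht _

theorem eq_zero_of_forall_eq_integral_of_abs_le {u g : ℝ → ℝ} {L b r : ℝ} (hL : 0 ≤ L)
    (hu : ContinuousOn u (uIcc b r)) (hint : ∀ c ∈ uIcc b r, u c = ∫ ρ in b..c, g ρ)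
    (hg : ∀ ρ ∈ uIcc b r, |g ρ| ≤ L * |u ρ|) (hr : L * |r - b| < 1) : u r = 0 := by
  obtain ⟨c, hc, hmax⟩ := isCompact_uIcc.exists_isMaxOn nonempty_uIcc hu.abs
  have hgc : ∀ ρ ∈ uIoc b c, ‖g ρ‖ ≤ L * |u c| := fun ρ hρ => by
    have hρ' : ρ ∈ uIcc b r := uIcc_subset_uIcc left_mem_uIcc hc (uIoc_subset_uIcc hρ)
    exact (hg ρ hρ').trans (mul_le_mul_of_nonneg_left (hmax hρ') hL)
  have hc0 : |u c| = 0 := by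
    have : |u c| ≤ L * |u c| * |r - b| := calc
      |u c| = ‖∫ ρ in b..c, g ρ‖ := by rw [hint c hc, Real.norm_eq_abs]
      _ ≤ L * |u c| * |c - b| := intervalIntegral.norm_integral_le_of_norm_le_const hgc
      _ ≤ L * |u c| * |r - b| :=
        mul_le_mul_of_nonneg_left (abs_sub_left_of_mem_uIcc hc) (by positivity)
    nlinarith [abs_nonneg (u c)]
  exact abs_nonpos_iff.mp (hc0 ▸ hmax (right_mem_uIcc (a := b)))

theorem eqOn_zero_of_sub_eq_integral {S : Set ℝ} (hS : S.OrdConnected) {u g : ℝ → ℝ} {L : ℝ}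
    (hL : 0 ≤ L) (hu : ContinuousOn u S)
    (hint : ∀ a ∈ S, ∀ b ∈ S, u b - u a = ∫ ρ in a..b, g ρ)
    (hg : ∀ ρ ∈ S, |g ρ| ≤ L * |u ρ|) {t₁ : ℝ} (ht₁ : t₁ ∈ S) (h0 : u t₁ = 0) :
    EqOn u 0 S := by
  have hnear : ∀ a ∈ S, ∀ y ∈ S, L * |y - a| < 1 → u a = 0 → u y = 0 := by
    intro a ha y hy hya hua
    exact eq_zero_of_forall_eq_integral_of_abs_le hL (hu.mono (hS.uIcc_subset ha hy))
      (fun c hc => by rw [← hint a ha c (hS.uIcc_subset ha hy hc), hua, sub_zero])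
      (fun ρ hρ => hg ρ (hS.uIcc_subset ha hy hρ)) hya
  intro r hr
  refine hS.isPreconnected.induction₂' (fun a y => u a = 0 → u y = 0) (fun a ha => ?_)
    (fun _ _ _ _ _ _ hab hbc => hbc ∘ hab) ht₁ hr h0
  have hball : Metric.ball a (1 / (L + 1)) ∈ 𝓝[S] a :=
    nhdsWithin_le_nhds (Metric.ball_mem_nhds a (by positivity))
  filter_upwards [hball, self_mem_nhdsWithin] with y hy hyS
  have hdist : L * |y - a| < 1 := by
    rw [Metric.mem_ball, Real.dist_eq, lt_div_iff₀ (by positivity)] at hy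
    nlinarith [abs_nonneg (y - a)]
  exact ⟨hnear a ha y hyS hdist, hnear y hyS a ha (by rwa [abs_sub_comm])⟩

namespace IsCaratheodorySol

variable {t0 T : ℝ} {G : ℝ → ℝ → ℝ} {s x : ℝ} {φ : ℝ → ℝ}

theorem sub_eq_integral (h : IsCaratheodorySol t0 T G s x φ) (hs : s ∈ Icc t0 T)
    (hint : IntegrableOn (fun r => G r (φ r)) (Icc t0 T)) {a b : ℝ} (ha : a ∈ Icc t0 T)
    (hb : b ∈ Icc t0 T) : φ b - φ a = ∫ r in a..b, G r (φ r) := by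
  have hii : ∀ c ∈ Icc t0 T, IntervalIntegrable (fun r => G r (φ r)) volume s c :=
    fun c hc => (hint.mono_set (uIcc_subset_Icc hs hc)).intervalIntegrable
  rw [h.2 b hb, h.2 a ha, add_sub_add_left_eq_sub,
    intervalIntegral.integral_interval_sub_left (hii b hb) (hii a ha)]

theorem eqOn {s₁ s₂ x₁ x₂ m L : ℝ} {φ₁ φ₂ : ℝ → ℝ} (hmeas : ∀ x, Measurable fun t => G t x)
    (hbound : ∀ t ∈ Icc t0 T, ∀ x, |G t x| ≤ m) (hL : 0 ≤ L)
    (hlip : ∀ t ∈ Icc t0 T, ∀ x y, |G t x - G t y| ≤ L * |x - y|)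
    (h₁ : IsCaratheodorySol t0 T G s₁ x₁ φ₁) (hs₁ : s₁ ∈ Icc t0 T)
    (h₂ : IsCaratheodorySol t0 T G s₂ x₂ φ₂) (hs₂ : s₂ ∈ Icc t0 T)
    {t₁ : ℝ} (ht₁ : t₁ ∈ Icc t0 T) (h : φ₁ t₁ = φ₂ t₁) : EqOn φ₁ φ₂ (Icc t0 T) := by
  have hcont : ∀ t ∈ Icc t0 T, Continuous (G t) := fun t ht =>
    (LipschitzWith.of_dist_le' fun x y => by
      simpa only [Real.dist_eq] using hlip t ht x y).continuous
  have hint₁ := integrableOn_Icc_comp_of_abs_le hmeas hcont hbound h₁.1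
  have hint₂ := integrableOn_Icc_comp_of_abs_le hmeas hcont hbound h₂.1
  have hzero : EqOn (φ₂ - φ₁) 0 (Icc t0 T) := by
    refine eqOn_zero_of_sub_eq_integral ordConnected_Icc hL (h₂.1.sub h₁.1)
      (g := fun r => G r (φ₂ r) - G r (φ₁ r)) (fun a ha b hb => ?_)
      (fun r hr => hlip r hr _ _) ht₁ (sub_eq_zero.2 h.symm)
    have hii : ∀ {ψ : ℝ → ℝ}, IntegrableOn (fun r => G r (ψ r)) (Icc t0 T) →
        IntervalIntegrable (fun r => G r (ψ r)) volume a b :=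
      fun hψ => (hψ.mono_set (uIcc_subset_Icc ha hb)).intervalIntegrable
    rw [intervalIntegral.integral_sub (hii hint₂) (hii hint₁),
      ← h₂.sub_eq_integral hs₂ hint₂ ha hb, ← h₁.sub_eq_integral hs₁ hint₁ ha hb,
      Pi.sub_apply, Pi.sub_apply]
    ring
  exact fun r hr => (sub_eq_zero.1 (hzero hr)).symm

end IsCaratheodorySol

theorem caratheodory_characteristics_disjoint_general
    (t0 T : ℝ) (G : ℝ → ℝ → ℝ)
    (hmeas : ∀ x : ℝ, Measurable fun t => G t x)
    (m : ℝ) (hbound : ∀ t ∈ Icc t0 T, ∀ x : ℝ, |G t x| ≤ m)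
    (L : ℝ) (hL : 0 ≤ L)
    (hlip : ∀ t ∈ Icc t0 T, ∀ x y : ℝ, |G t x - G t y| ≤ L * |x - y|)
    (Φ : ℝ → ℝ → ℝ → ℝ)
    (hΦ : ∀ s ∈ Icc t0 T, ∀ x : ℝ, IsCaratheodorySol t0 T G s x (fun t => Φ t s x))
    (s : ℝ) (hs : s ∈ Icc t0 T) (x₁ x₂ : ℝ) (hx : x₁ < x₂) :
    ∀ t ∈ Icc t0 T, Φ t s x₁ < Φ t s x₂ := by
  intro t ht
  by_contra! hle
  have h₁ := hΦ s hs x₁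
  have h₂ := hΦ s hs x₂
  have hinit : ∀ {x}, Φ s s x = x := fun {x} => by simpa using (hΦ s hs x).2 s hs
  obtain ⟨t₁, ht₁, hmeet⟩ : ∃ t₁ ∈ uIcc s t, Φ t₁ s x₂ - Φ t₁ s x₁ = 0 :=
    intermediate_value_uIcc ((h₂.1.sub h₁.1).mono (uIcc_subset_Icc hs ht))
      (mem_uIcc.2 (Or.inr ⟨by simpa only [Pi.sub_apply, sub_nonpos],
        by simp only [Pi.sub_apply, hinit]; linarith⟩))
  have hsame := h₁.eqOn hmeas hbound hL hlip hs h₂ hs (uIcc_subset_Icc hs ht ht₁)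
    (sub_eq_zero.1 hmeet).symm hs
  simp only [hinit] at hsame
  exact hx.ne hsame

/-- Distinct characteristic curves never intersect: if `x₁ < x₂`, then
`Φ(t, s, x₁) < Φ(t, s, x₂)` for every `t ∈ [t0, T]`. -/
theorem caratheodory_characteristics_disjoint
    (t0 T : ℝ) (ht : t0 < T) (G : ℝ → ℝ → ℝ)
    (hmeas : ∀ x : ℝ, Measurable fun t => G t x)
    (m : ℝ) (hm : 0 ≤ m) (hbound : ∀ t ∈ Icc t0 T, ∀ x : ℝ, |G t x| ≤ m)
    (L : ℝ) (hL : 0 ≤ L)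
    (hlip : ∀ t ∈ Icc t0 T, ∀ x y : ℝ, |G t x - G t y| ≤ L * |x - y|)
    (Φ : ℝ → ℝ → ℝ → ℝ)
    (hΦ : ∀ s ∈ Icc t0 T, ∀ x : ℝ, IsCaratheodorySol t0 T G s x (fun t => Φ t s x))
    (s : ℝ) (hs : s ∈ Icc t0 T) (x₁ x₂ : ℝ) (hx : x₁ < x₂) :
    ∀ t ∈ Icc t0 T, Φ t s x₁ < Φ t s x₂ :=
  caratheodory_characteristics_disjoint_general t0 T G hmeas m hbound L hL hlip Φ hΦ s hs x₁ x₂ hx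
end

section
/- Let Φ : [t0,T] × [t0,T] × ℝ → ℝ be a function such that for every (s,x), the map t ↦ Φ(t,s,x) is a Carathéodory solution with data (s,x), and assume in addition that G(r,1) > 0 for every r ∈ [t0,T]. Then for every t ∈ [t0,T] and every x with 1 ≤ x ≤ Φ(t,t0,1), there exists a unique s ∈ [t0,t] such that Φ(s,t,x) = 1 (equivalently, Φ(t,s,1) = x). This defines the entry-time function φ on the closure of Ω₁ = {(t,x) : x < Φ(t,t0,1)}. -/
/-!
Put `ψ = Φ(·, t, x)`. If two solutions of the Lipschitz integral equation agree at a time `c`,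
the maximum `M` of their distance over `[[c, u]]` satisfies `M ≤ L |u - c| M`, so they agree
near `c`, and by connectedness everywhere. Hence `ψ` cannot cross the solution through `(t0, 1)`,
which gives `ψ t0 ≤ 1 ≤ x = ψ t`, and the intermediate value theorem yields an entry time.
Near a time `s` with `ψ s = 1` the same maximum argument shows that `ψ r - 1` differs from
`∫ u in s..r, G u 1` by a small fraction of it, so `ψ` crosses the level `1` only upwards, and
therefore at most once.
-/

open MeasureTheory Set

open Filter Topology

section Caratheodory

variable {G : ℝ → ℝ → ℝ} {s : Set ℝ} {ψ : ℝ → ℝ}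

theorem aestronglyMeasurable_comp_of_continuousOn (hmeas : ∀ x, Measurable fun t => G t x)
    (hcont : ∀ t ∈ s, Continuous (G t)) (hs : MeasurableSet s) (hψ : ContinuousOn ψ s) :
    AEStronglyMeasurable (fun t => G t (ψ t)) (volume.restrict s) := by
  classical
  -- `G t` is continuous only for `t ∈ s`; outside `s` replace it by `0`.
  set H : ℝ → ℝ → ℝ := fun x t => if t ∈ s then G t x else 0
  have hH : Measurable (Function.uncurry H) := by
    refine measurable_uncurry_of_continuous_of_measurable (fun t => ?_)
      fun x => (hmeas x).ite hs measurable_const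
    by_cases ht : t ∈ s
    · simpa only [H, if_pos ht] using hcont t ht
    · simpa only [H, if_neg ht] using continuous_const
  refine (hH.comp_aemeasurable ((hψ.aemeasurable hs).prodMk aemeasurable_id))
    |>.aestronglyMeasurable.congr ?_
  filter_upwards [ae_restrict_mem hs] with t ht
  simp only [Function.comp_apply, Function.uncurry_apply_pair, id, H, if_pos ht]

theorem integrableOn_comp_of_continuousOn {m : ℝ} (hmeas : ∀ x, Measurable fun t => G t x)
    (hcont : ∀ t ∈ s, Continuous (G t)) (hbound : ∀ t ∈ s, ∀ x, |G t x| ≤ m)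
    (hs : MeasurableSet s) (hfin : volume s < ⊤) (hψ : ContinuousOn ψ s) :
    IntegrableOn (fun t => G t (ψ t)) s :=
  .of_bound hfin (aestronglyMeasurable_comp_of_continuousOn hmeas hcont hs hψ) m
    ((ae_restrict_mem hs).mono fun t ht => hbound t ht (ψ t))

end Caratheodory

theorem abs_integral_le_of_nonneg_of_mem_uIcc {g : ℝ → ℝ} {a b c : ℝ}
    (hg : ∀ u ∈ uIcc a b, 0 ≤ g u) (hgi : IntervalIntegrable g volume a b) (hc : c ∈ uIcc a b) :
    |∫ u in a..c, g u| ≤ |∫ u in a..b, g u| :=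
  intervalIntegral.abs_integral_mono_interval
    (uIoc_subset_uIoc_of_uIcc_subset_uIcc (uIcc_subset_uIcc_left hc))
    (ae_restrict_of_forall_mem measurableSet_uIoc fun u hu => hg u (uIoc_subset_uIcc hu)) hgi

structure IsIntegralSolutionOn (G : ℝ → ℝ → ℝ) (s : Set ℝ) (ψ : ℝ → ℝ) : Prop where
  continuousOn : ContinuousOn ψ s
  integrableOn : IntegrableOn (fun r => G r (ψ r)) s
  sub_eq_integral : ∀ a ∈ s, ∀ b ∈ s, ψ b - ψ a = ∫ r in a..b, G r (ψ r)

theorem IsCaratheodorySol.isIntegralSolutionOn {t0 T s x : ℝ} {G : ℝ → ℝ → ℝ} {Φ : ℝ → ℝ}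
    (hΦ : IsCaratheodorySol t0 T G s x Φ) (hint : IntegrableOn (fun r => G r (Φ r)) (Icc t0 T))
    (hs : s ∈ Icc t0 T) : IsIntegralSolutionOn G (Icc t0 T) Φ where
  continuousOn := hΦ.1
  integrableOn := hint
  sub_eq_integral a ha b hb := by
    rw [hΦ.2 a ha, hΦ.2 b hb, add_sub_add_left_eq_sub,
      intervalIntegral.integral_interval_sub_left
        (hint.mono_set (uIcc_subset_Icc hs hb)).intervalIntegrable
        (hint.mono_set (uIcc_subset_Icc hs ha)).intervalIntegrable]

namespace IsIntegralSolutionOn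

variable {G : ℝ → ℝ → ℝ} {t0 T L x : ℝ} {ψ χ : ℝ → ℝ}

theorem abs_sub_sub_integral_le (hψ : IsIntegralSolutionOn G (Icc t0 T) ψ)
    (hχ : IntegrableOn (fun r => G r (χ r)) (Icc t0 T))
    (hlip : ∀ t ∈ Icc t0 T, ∀ x y : ℝ, |G t x - G t y| ≤ L * |x - y|) (hL : 0 ≤ L)
    {a b M : ℝ} (ha : a ∈ Icc t0 T) (hb : b ∈ Icc t0 T)
    (hM : ∀ y ∈ uIcc a b, |ψ y - χ y| ≤ M) :
    |ψ b - ψ a - ∫ r in a..b, G r (χ r)| ≤ L * M * |b - a| := by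
  have hab := uIcc_subset_Icc ha hb
  rw [hψ.sub_eq_integral a ha b hb, ← intervalIntegral.integral_sub
    (hψ.integrableOn.mono_set hab).intervalIntegrable (hχ.mono_set hab).intervalIntegrable,
    ← Real.norm_eq_abs]
  refine intervalIntegral.norm_integral_le_of_norm_le_const fun y hy => ?_
  have hy' := uIoc_subset_uIcc hy
  calc ‖G y (ψ y) - G y (χ y)‖ ≤ L * |ψ y - χ y| := hlip y (hab hy') _ _
    _ ≤ L * M := mul_le_mul_of_nonneg_left (hM y hy') hL

theorem eq_of_mul_abs_sub_lt_one (hψ : IsIntegralSolutionOn G (Icc t0 T) ψ)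
    (hχ : IsIntegralSolutionOn G (Icc t0 T) χ)
    (hlip : ∀ t ∈ Icc t0 T, ∀ x y : ℝ, |G t x - G t y| ≤ L * |x - y|) (hL : 0 ≤ L)
    {c u : ℝ} (hc : c ∈ Icc t0 T) (hu : u ∈ Icc t0 T) (hcu : ψ c = χ c)
    (hsmall : L * |u - c| < 1) : ψ u = χ u := by
  have hK := uIcc_subset_Icc hc hu
  obtain ⟨v, hv, hmax⟩ := isCompact_uIcc.exists_isMaxOn nonempty_uIcc
    (((hψ.continuousOn.sub hχ.continuousOn).mono hK).abs)
  have hM : ∀ y ∈ uIcc c u, |ψ y - χ y| ≤ |ψ v - χ v| := hmax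
  have hv' : |ψ v - χ v| ≤ L * |ψ v - χ v| * |u - c| := by
    have h := hψ.abs_sub_sub_integral_le hχ.integrableOn hlip hL hc (hK hv)
      fun y hy => hM y (uIcc_subset_uIcc_left hv hy)
    rw [← hχ.sub_eq_integral c hc v (hK hv), hcu, sub_sub_sub_cancel_right] at h
    exact h.trans (mul_le_mul_of_nonneg_left (abs_sub_left_of_mem_uIcc hv)
      (mul_nonneg hL (abs_nonneg _)))
  have hzero : |ψ v - χ v| = 0 := by nlinarith [abs_nonneg (ψ v - χ v)]
  exact sub_eq_zero.1 (abs_nonpos_iff.1 (hzero ▸ hM u right_mem_uIcc))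

theorem eqOn_of_eq (hψ : IsIntegralSolutionOn G (Icc t0 T) ψ)
    (hχ : IsIntegralSolutionOn G (Icc t0 T) χ)
    (hlip : ∀ t ∈ Icc t0 T, ∀ x y : ℝ, |G t x - G t y| ≤ L * |x - y|) (hL : 0 ≤ L)
    {c : ℝ} (hc : c ∈ Icc t0 T) (hcc : ψ c = χ c) : EqOn ψ χ (Icc t0 T) := by
  have : PreconnectedSpace (Icc t0 T) := isPreconnected_iff_preconnectedSpace.1 isPreconnected_Icc
  have hloc : IsLocallyConstant fun u : Icc t0 T => ψ u = χ u := by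
    refine (IsLocallyConstant.iff_eventually_eq _).2 fun u => ?_
    have hsmall : ∀ᶠ v : Icc t0 T in 𝓝 u, L * |(v : ℝ) - u| < 1 :=
      (by fun_prop : Continuous fun v : Icc t0 T => L * |(v : ℝ) - u|).continuousAt.eventually_lt
        continuousAt_const (by simp)
    filter_upwards [hsmall] with v hv
    refine propext ⟨fun h => hψ.eq_of_mul_abs_sub_lt_one hχ hlip hL v.2 u.2 h ?_,
      fun h => hψ.eq_of_mul_abs_sub_lt_one hχ hlip hL u.2 v.2 h hv⟩
    rwa [abs_sub_comm]
  intro u hu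
  simpa using hloc.apply_eq_of_preconnectedSpace ⟨c, hc⟩ ⟨u, hu⟩ ▸ hcc

theorem le_of_le (hψ : IsIntegralSolutionOn G (Icc t0 T) ψ)
    (hχ : IsIntegralSolutionOn G (Icc t0 T) χ)
    (hlip : ∀ t ∈ Icc t0 T, ∀ x y : ℝ, |G t x - G t y| ≤ L * |x - y|) (hL : 0 ≤ L)
    {a b : ℝ} (ha : a ∈ Icc t0 T) (hb : b ∈ Icc t0 T) (hab : ψ b ≤ χ b) : ψ a ≤ χ a := by
  by_contra! h
  obtain ⟨c, hc, hcc⟩ : ∃ c ∈ uIcc a b, (ψ - χ) c = 0 :=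
    intermediate_value_uIcc ((hψ.continuousOn.sub hχ.continuousOn).mono (uIcc_subset_Icc ha hb))
      (mem_uIcc.2 (Or.inr ⟨sub_nonpos.2 hab, (sub_pos.2 h).le⟩))
  exact h.ne' (hψ.eqOn_of_eq hχ hlip hL (uIcc_subset_Icc ha hb hc) (sub_eq_zero.1 hcc) ha)

theorem mul_abs_sub_sub_integral_le (hψ : IsIntegralSolutionOn G (Icc t0 T) ψ)
    (hx : IntegrableOn (fun r => G r x) (Icc t0 T))
    (hlip : ∀ t ∈ Icc t0 T, ∀ x y : ℝ, |G t x - G t y| ≤ L * |x - y|) (hL : 0 ≤ L)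
    {s r N : ℝ} (hs : s ∈ Icc t0 T) (hr : r ∈ Icc t0 T) (hψs : ψ s = x)
    (hN : ∀ v ∈ uIcc s r, |∫ u in s..v, G u x| ≤ N) :
    (1 - L * |r - s|) * |ψ r - x - ∫ u in s..r, G u x| ≤ L * |r - s| * N := by
  have hK := uIcc_subset_Icc hs hr
  -- `v` maximises `|ψ - x|` on `[[s, r]]`: the error estimate at `v` bounds that maximum by `N`.
  obtain ⟨v, hv, hmax⟩ := isCompact_uIcc.exists_isMaxOn nonempty_uIcc
    ((hψ.continuousOn.mono hK).sub continuousOn_const).abs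
  have hθ : 0 ≤ L * |r - s| := mul_nonneg hL (abs_nonneg _)
  have hE : ∀ y ∈ uIcc s r, |ψ y - x - ∫ u in s..y, G u x| ≤ L * |r - s| * |ψ v - x| := by
    intro y hy
    have h := hψ.abs_sub_sub_integral_le (χ := fun _ => x) hx hlip hL hs (hK hy)
      fun z hz => hmax (uIcc_subset_uIcc_left hy hz)
    rw [hψs] at h
    refine h.trans ?_
    rw [mul_right_comm]
    exact mul_le_mul_of_nonneg_right (mul_le_mul_of_nonneg_left (abs_sub_left_of_mem_uIcc hy) hL)
      (abs_nonneg _)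
  have hM : |ψ v - x| ≤ N + L * |r - s| * |ψ v - x| := by
    have := abs_sub_abs_le_abs_sub (ψ v - x) (∫ u in s..v, G u x)
    linarith [hE v hv, hN v hv]
  have hN0 : 0 ≤ N := by simpa using hN s left_mem_uIcc
  have hEr := hE r right_mem_uIcc
  rcases le_total (L * |r - s|) 1 with h1 | h1
  · nlinarith [mul_le_mul_of_nonneg_left hEr (sub_nonneg.2 h1)]
  · nlinarith [abs_nonneg (ψ r - x - ∫ u in s..r, G u x)]

theorem eventually_gt_of_eq (hψ : IsIntegralSolutionOn G (Icc t0 T) ψ)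
    (hx : IntegrableOn (fun r => G r x) (Icc t0 T))
    (hlip : ∀ t ∈ Icc t0 T, ∀ x y : ℝ, |G t x - G t y| ≤ L * |x - y|) (hL : 0 ≤ L)
    (hpos : ∀ r ∈ Icc t0 T, 0 < G r x) {s : ℝ} (hs : s ∈ Ico t0 T) (hψs : ψ s = x) :
    ∀ᶠ r in 𝓝[>] s, x < ψ r := by
  have hsmall : ∀ᶠ r in 𝓝 s, 2 * (L * |r - s|) < 1 :=
    (by fun_prop : Continuous fun r => 2 * (L * |r - s|)).continuousAt.eventually_lt
      continuousAt_const (by simp)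
  filter_upwards [Icc_mem_nhdsGT_of_mem hs, self_mem_nhdsWithin, nhdsWithin_le_nhds hsmall]
    with r hr (hsr : s < r) hθ
  have hsI := Ico_subset_Icc_self hs
  have hK := uIcc_subset_Icc hsI hr
  have hint := (hx.mono_set hK).intervalIntegrable
  have hF : 0 < ∫ u in s..r, G u x :=
    intervalIntegral.intervalIntegral_pos_of_pos_on hint
      (fun u hu => hpos u ⟨hsI.1.trans hu.1.le, hu.2.le.trans hr.2⟩) hsr
  have h := hψ.mul_abs_sub_sub_integral_le hx hlip hL hsI hr hψs fun v hv =>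
    (abs_integral_le_of_nonneg_of_mem_uIcc (fun u hu => (hpos u (hK hu)).le) hint hv).trans_eq
      (abs_of_pos hF)
  nlinarith [neg_abs_le (ψ r - x - ∫ u in s..r, G u x), abs_nonneg (r - s)]

theorem eventually_lt_of_eq (hψ : IsIntegralSolutionOn G (Icc t0 T) ψ)
    (hx : IntegrableOn (fun r => G r x) (Icc t0 T))
    (hlip : ∀ t ∈ Icc t0 T, ∀ x y : ℝ, |G t x - G t y| ≤ L * |x - y|) (hL : 0 ≤ L)
    (hpos : ∀ r ∈ Icc t0 T, 0 < G r x) {s : ℝ} (hs : s ∈ Ioc t0 T) (hψs : ψ s = x) :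
    ∀ᶠ r in 𝓝[<] s, ψ r < x := by
  have hsmall : ∀ᶠ r in 𝓝 s, 2 * (L * |r - s|) < 1 :=
    (by fun_prop : Continuous fun r => 2 * (L * |r - s|)).continuousAt.eventually_lt
      continuousAt_const (by simp)
  filter_upwards [Icc_mem_nhdsLT_of_mem hs, self_mem_nhdsWithin, nhdsWithin_le_nhds hsmall]
    with r hr (hrs : r < s) hθ
  have hsI := Ioc_subset_Icc_self hs
  have hK := uIcc_subset_Icc hsI hr
  have hint := (hx.mono_set hK).intervalIntegrable
  have hF : 0 < ∫ u in r..s, G u x :=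
    intervalIntegral.intervalIntegral_pos_of_pos_on hint.symm
      (fun u hu => hpos u ⟨hr.1.trans hu.1.le, hu.2.le.trans hsI.2⟩) hrs
  have h := hψ.mul_abs_sub_sub_integral_le hx hlip hL hsI hr hψs fun v hv =>
    (abs_integral_le_of_nonneg_of_mem_uIcc (fun u hu => (hpos u (hK hu)).le) hint hv).trans_eq
      (by rw [intervalIntegral.integral_symm, abs_neg, abs_of_pos hF])
  rw [intervalIntegral.integral_symm r s] at h
  nlinarith [le_abs_self (ψ r - x - -∫ u in r..s, G u x), abs_nonneg (r - s)]

theorem le_of_eq_of_le (hψ : IsIntegralSolutionOn G (Icc t0 T) ψ)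
    (hx : IntegrableOn (fun r => G r x) (Icc t0 T))
    (hlip : ∀ t ∈ Icc t0 T, ∀ x y : ℝ, |G t x - G t y| ≤ L * |x - y|) (hL : 0 ≤ L)
    (hpos : ∀ r ∈ Icc t0 T, 0 < G r x) {s r : ℝ} (hs : s ∈ Icc t0 T) (hψs : ψ s = x)
    (hr : r ∈ Icc t0 T) (hsr : s ≤ r) : x ≤ ψ r := by
  have hsub : Icc s T ⊆ Icc t0 T := Icc_subset_Icc_left hs.1
  refine IsClosed.Icc_subset_of_forall_mem_nhdsWithin (s := {v | x ≤ ψ v}) ?_ hψs.ge ?_ ⟨hsr, hr.2⟩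
  · rw [inter_comm]
    exact (hψ.continuousOn.mono hsub).preimage_isClosed_of_isClosed isClosed_Icc isClosed_Ici
  rintro v ⟨hv, hvs, hvT⟩
  have hvI : v ∈ Ico t0 T := ⟨hs.1.trans hvs, hvT⟩
  rcases (show x ≤ ψ v from hv).eq_or_lt with h | h
  · exact (hψ.eventually_gt_of_eq hx hlip hL hpos hvI h.symm).mono fun _ => le_of_lt
  · have hcont : ContinuousWithinAt ψ (Ioi v) v :=
      (hψ.continuousOn v (Ico_subset_Icc_self hvI)).mono_of_mem_nhdsWithin
        (Icc_mem_nhdsGT_of_mem hvI)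
    exact (hcont.eventually_const_lt h).mono fun _ => le_of_lt

theorem subsingleton_inter_preimage_singleton (hψ : IsIntegralSolutionOn G (Icc t0 T) ψ)
    (hx : IntegrableOn (fun r => G r x) (Icc t0 T))
    (hlip : ∀ t ∈ Icc t0 T, ∀ x y : ℝ, |G t x - G t y| ≤ L * |x - y|) (hL : 0 ≤ L)
    (hpos : ∀ r ∈ Icc t0 T, 0 < G r x) : (Icc t0 T ∩ ψ ⁻¹' {x}).Subsingleton := by
  suffices ∀ s₁ ∈ Icc t0 T, ∀ s₂ ∈ Icc t0 T, ψ s₁ = x → ψ s₂ = x → ¬s₁ < s₂ by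
    rintro a ⟨ha, hax⟩ b ⟨hb, hbx⟩
    exact le_antisymm (not_lt.1 (this b hb a ha hbx hax)) (not_lt.1 (this a ha b hb hax hbx))
  intro s₁ hs₁ s₂ hs₂ h₁ h₂ h₁₂
  obtain ⟨r, hr, hr₁, hr₂⟩ := ((hψ.eventually_lt_of_eq hx hlip hL hpos
    ⟨hs₁.1.trans_lt h₁₂, hs₂.2⟩ h₂).and (Ioo_mem_nhdsLT h₁₂)).exists
  exact hr.not_ge (hψ.le_of_eq_of_le hx hlip hL hpos hs₁ h₁
    ⟨hs₁.1.trans hr₁.le, hr₂.le.trans hs₂.2⟩ hr₁.le)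

end IsIntegralSolutionOn

theorem caratheodory_entry_time_left_general
    (t0 T : ℝ) (G : ℝ → ℝ → ℝ)
    (hmeas : ∀ x : ℝ, Measurable fun t => G t x)
    (m : ℝ) (hbound : ∀ t ∈ Icc t0 T, ∀ x : ℝ, |G t x| ≤ m)
    (L : ℝ) (hL : 0 ≤ L)
    (hlip : ∀ t ∈ Icc t0 T, ∀ x y : ℝ, |G t x - G t y| ≤ L * |x - y|)
    (Φ : ℝ → ℝ → ℝ → ℝ)
    (hΦ : ∀ s ∈ Icc t0 T, ∀ x : ℝ, IsCaratheodorySol t0 T G s x (fun t => Φ t s x))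
    (hG1 : ∀ r ∈ Icc t0 T, 0 < G r 1) :
    ∀ t ∈ Icc t0 T, ∀ x : ℝ, 1 ≤ x → x ≤ Φ t t0 1 →
      ∃! s : ℝ, s ∈ Icc t0 t ∧ Φ s t x = 1 := by
  intro t ht x hx1 hxΦ
  have hcont : ∀ r ∈ Icc t0 T, Continuous (G r) := fun r hr =>
    (LipschitzWith.of_dist_le_mul (K := ⟨L, hL⟩) (hlip r hr)).continuous
  have hint {ψ : ℝ → ℝ} (hψ : ContinuousOn ψ (Icc t0 T)) :
      IntegrableOn (fun r => G r (ψ r)) (Icc t0 T) :=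
    integrableOn_comp_of_continuousOn hmeas hcont hbound measurableSet_Icc measure_Icc_lt_top hψ
  have hsol (s : ℝ) (hs : s ∈ Icc t0 T) (y : ℝ) :
      IsIntegralSolutionOn G (Icc t0 T) fun r => Φ r s y :=
    (hΦ s hs y).isIntegralSolutionOn (hint (hΦ s hs y).1) hs
  have hstart (s : ℝ) (hs : s ∈ Icc t0 T) (y : ℝ) : Φ s s y = y := by
    simpa using (hΦ s hs y).2 s hs
  have ht0 : t0 ∈ Icc t0 T := ⟨le_rfl, ht.1.trans ht.2⟩
  have hsub : Icc t0 t ⊆ Icc t0 T := Icc_subset_Icc_right ht.2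
  have hle : Φ t0 t x ≤ 1 := by
    simpa [hstart t0 ht0] using
      (hsol t ht x).le_of_le (hsol t0 ht0 1) hlip hL ht0 ht (by rwa [hstart t ht x])
  obtain ⟨s, hs, hs1⟩ := intermediate_value_Icc ht.1 ((hsol t ht x).continuousOn.mono hsub)
    ⟨hle, (hstart t ht x).symm ▸ hx1⟩
  exact ⟨s, ⟨hs, hs1⟩, fun s' ⟨hs', hs'1⟩ =>
    (hsol t ht x).subsingleton_inter_preimage_singleton (hint continuousOn_const) hlip hL hG1
      ⟨hsub hs', hs'1⟩ ⟨hsub hs, hs1⟩⟩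

/-- Existence and uniqueness of the entry time into the region
`Ω₁ = {(t, x) : x < Φ(t, t0, 1)}`: if `G(·, 1) > 0` on `[t0, T]`, then for every
`t ∈ [t0, T]` and `1 ≤ x ≤ Φ(t, t0, 1)` there is a unique `s ∈ [t0, t]` with
`Φ(s, t, x) = 1`. -/
theorem caratheodory_entry_time_left
    (t0 T : ℝ) (ht : t0 < T) (G : ℝ → ℝ → ℝ)
    (hmeas : ∀ x : ℝ, Measurable fun t => G t x)
    (m : ℝ) (hm : 0 ≤ m) (hbound : ∀ t ∈ Icc t0 T, ∀ x : ℝ, |G t x| ≤ m)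
    (L : ℝ) (hL : 0 ≤ L)
    (hlip : ∀ t ∈ Icc t0 T, ∀ x y : ℝ, |G t x - G t y| ≤ L * |x - y|)
    (Φ : ℝ → ℝ → ℝ → ℝ)
    (hΦ : ∀ s ∈ Icc t0 T, ∀ x : ℝ, IsCaratheodorySol t0 T G s x (fun t => Φ t s x))
    (hG1 : ∀ r ∈ Icc t0 T, 0 < G r 1) :
    ∀ t ∈ Icc t0 T, ∀ x : ℝ, 1 ≤ x → x ≤ Φ t t0 1 →
      ∃! s : ℝ, s ∈ Icc t0 t ∧ Φ s t x = 1 :=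
  caratheodory_entry_time_left_general t0 T G hmeas m hbound L hL hlip Φ hΦ hG1
end

section
/- Let b > 1 and let Φ : [t0,T] × [t0,T] × ℝ → ℝ be a function such that for every (s,x), the map t ↦ Φ(t,s,x) is a Carathéodory solution with data (s,x), and assume in addition that G(r,b) < 0 for every r ∈ (t0,T]. Then for every t ∈ (t0,T] and every x with Φ(t,t0,b) ≤ x ≤ b, there exists a unique s ∈ [t0,t] such that Φ(s,t,x) = b (equivalently, Φ(t,s,b) = x). This defines the entry-time function θ on the closure of Ω₃ = {(t,x) : Φ(t,t0,b) < x ≤ b}. -/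
open MeasureTheory Set

/-!
Everything rests on a comparison principle for Carathéodory solutions, proved by a one-sided
Grönwall argument started at the last contact time. Comparing, backwards from time `t`, the
solutions through `(t0, b)` and `(t, x)` gives `Φ(t0, t, x) ≥ b`, and the intermediate value
theorem produces an entry time. The constant `b` solves `x' = G(t, x) - G(t, b)`, whose right-hand
side dominates `G`; comparing with it, a solution that hits `b` stays below `b` afterwards and
above `b` before. Two hits would thus force it to equal `b` in between, against `G(·, b) < 0`.
-/

theorem eq_zero_of_le_mul_integral_of_nonneg {v : ℝ → ℝ} {a c L : ℝ}
    (hv : ContinuousOn v (Icc a c)) (hv0 : ∀ r ∈ Icc a c, 0 ≤ v r)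
    (hle : ∀ r ∈ Icc a c, v r ≤ L * ∫ τ in a..r, v τ) :
    ∀ r ∈ Icc a c, v r = 0 := by
  rcases lt_or_ge c a with hca | hac
  · exact fun r hr => absurd (hr.1.trans hr.2) (not_le.2 hca)
  -- Extend `v` continuously to `ℝ`, so that its primitive is differentiable and the
  -- differential Grönwall inequality applies to it.
  set w := IccExtend hac ((Icc a c).domRestrict v)
  have hw : Continuous w := continuous_IccExtend_iff.2 hv.domRestrict
  have hwv : EqOn w v (Icc a c) := fun r hr => IccExtend_of_mem hac _ hr
  have hint : ∀ r ∈ Icc a c, ∫ τ in a..r, w τ = ∫ τ in a..r, v τ := fun r hr =>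
    intervalIntegral.integral_congr (hwv.mono (uIcc_subset_Icc (left_mem_Icc.2 hac) hr))
  have hW := eq_zero_of_abs_deriv_le_mul_abs_self_of_eq_zero_right (K := |L|)
    (f := fun r => ∫ τ in a..r, w τ)
    (fun r _ => (hw.integral_hasStrictDerivAt a r).hasDerivAt.continuousAt.continuousWithinAt)
    (fun r _ => (hw.integral_hasStrictDerivAt a r).hasDerivAt.hasDerivWithinAt)
    intervalIntegral.integral_same fun r hr => by
      rw [Real.norm_eq_abs, Real.norm_eq_abs, hwv (Ico_subset_Icc_self hr),
        abs_of_nonneg (hv0 r (Ico_subset_Icc_self hr)), hint r (Ico_subset_Icc_self hr), ← abs_mul]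
      exact (hle r (Ico_subset_Icc_self hr)).trans (le_abs_self _)
  intro r hr
  refine le_antisymm ?_ (hv0 r hr)
  simpa [← hint r hr, hW r hr] using hle r hr

theorem nonpos_of_le_mul_integral_since_zero {u : ℝ → ℝ} {a c L : ℝ}
    (hu : ContinuousOn u (Icc a c)) (ha : u a ≤ 0)
    (hle : ∀ σ ∈ Icc a c, ∀ r ∈ Icc σ c, u σ = 0 → (∀ τ ∈ Icc σ r, 0 ≤ u τ) →
      u r ≤ L * ∫ τ in σ..r, u τ) :
    ∀ r ∈ Icc a c, u r ≤ 0 := by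
  intro r hr
  by_contra! hur
  have hur' : ContinuousOn u (Icc a r) := hu.mono (Icc_subset_Icc_right hr.2)
  have hZ : IsCompact (Icc a r ∩ u ⁻¹' {0}) := isCompact_Icc.of_isClosed_subset
    (hur'.preimage_isClosed_of_isClosed isClosed_Icc isClosed_singleton) inter_subset_left
  obtain ⟨z, hz, hz0⟩ := intermediate_value_Icc hr.1 hur' ⟨ha, hur.le⟩
  obtain ⟨σ, ⟨hσ, huσ⟩, hσmax⟩ := hZ.exists_isGreatest ⟨z, hz, hz0⟩
  -- `σ` is the last zero of `u` before `r`, so `u` keeps the sign of `u r` on `[σ, r]`.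
  have hpos : ∀ τ ∈ Icc σ r, 0 ≤ u τ := by
    intro τ hτ
    by_contra! hτ0
    obtain ⟨z, hz, hz0⟩ := intermediate_value_Icc hτ.2
      (hur'.mono (Icc_subset_Icc_left (hσ.1.trans hτ.1))) ⟨hτ0.le, hur.le⟩
    have hzσ : z ≤ σ := hσmax ⟨⟨hσ.1.trans (hτ.1.trans hz.1), hz.2⟩, hz0⟩
    have hτσ : τ = σ := le_antisymm (hz.1.trans hzσ) hτ.1
    rw [hτσ, huσ] at hτ0
    exact lt_irrefl _ hτ0
  have hσc : σ ∈ Icc a c := ⟨hσ.1, hσ.2.trans hr.2⟩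
  have hzero := eq_zero_of_le_mul_integral_of_nonneg (hu.mono (Icc_subset_Icc hσ.1 hr.2)) hpos
    (fun r' hr' => hle σ hσc r' ⟨hr'.1, hr'.2.trans hr.2⟩ huσ
      fun τ hτ => hpos τ ⟨hτ.1, hτ.2.trans hr'.2⟩) r ⟨hσ.2, le_rfl⟩
  exact hur.ne' hzero

theorem nonpos_of_le_mul_integral_until_zero {u : ℝ → ℝ} {a c L : ℝ}
    (hu : ContinuousOn u (Icc a c)) (hc : u c ≤ 0)
    (hle : ∀ r ∈ Icc a c, ∀ σ ∈ Icc a r, u r = 0 → (∀ τ ∈ Icc σ r, 0 ≤ u τ) →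
      u σ ≤ L * ∫ τ in σ..r, u τ) :
    ∀ σ ∈ Icc a c, u σ ≤ 0 := by
  have hrefl : MapsTo (fun r => a + c - r) (Icc a c) (Icc a c) := fun r hr =>
    ⟨by linarith [hr.2], by linarith [hr.1]⟩
  have h := nonpos_of_le_mul_integral_since_zero (u := fun r => u (a + c - r)) (L := L)
    (hu.comp (by fun_prop) hrefl) (by simpa using hc) fun σ hσ r hr h0 hpos => by
      rw [intervalIntegral.integral_comp_sub_left (fun τ => u τ) (a + c)]
      refine hle (a + c - σ) (hrefl hσ) (a + c - r) ⟨by linarith [hr.2], by linarith [hr.1]⟩ h0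
        fun τ hτ => ?_
      simpa using hpos (a + c - τ) ⟨by linarith [hτ.2], by linarith [hτ.1]⟩
  intro σ hσ
  simpa using h (a + c - σ) (hrefl hσ)

theorem integrableOn_Icc_caratheodory_comp {G : ℝ → ℝ → ℝ} {a c m : ℝ}
    (hmeas : ∀ x, Measurable fun t => G t x) (hcont : ∀ t ∈ Icc a c, Continuous (G t))
    (hbound : ∀ t ∈ Icc a c, ∀ x, |G t x| ≤ m) {φ : ℝ → ℝ} (hφ : ContinuousOn φ (Icc a c)) :
    IntegrableOn (fun t => G t (φ t)) (Icc a c) := by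
  rcases lt_or_ge c a with hca | hac
  · simp [Icc_eq_empty_of_lt hca]
  -- Joint measurability of a Carathéodory function needs continuity in `x` for every `t`.
  set G' : ℝ → ℝ → ℝ := fun t x => if t ∈ Icc a c then G t x else 0
  have hG' : Measurable (Function.uncurry fun x t => G' t x) :=
    measurable_uncurry_of_continuous_of_measurable
      (fun t => by
        by_cases ht : t ∈ Icc a c
        · simpa only [G', if_pos ht] using hcont t ht
        · simp only [G', if_neg ht, continuous_const])
      fun x => (hmeas x).ite measurableSet_Icc measurable_const
  set ψ := IccExtend hac ((Icc a c).domRestrict φ)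
  have hψ : Continuous ψ := continuous_IccExtend_iff.2 hφ.domRestrict
  have heq : EqOn (fun t => G' t (ψ t)) (fun t => G t (φ t)) (Icc a c) := fun t ht => by
    simp only [G', ψ, if_pos ht, IccExtend_of_mem hac _ ht, domRestrict_apply]
  refine IntegrableOn.congr_fun ?_ heq measurableSet_Icc
  refine Integrable.mono' (integrableOn_const (C := m) measure_Icc_lt_top.ne)
    (hG'.comp (hψ.measurable.prodMk measurable_id)).aestronglyMeasurable ?_
  filter_upwards [ae_restrict_mem measurableSet_Icc] with t ht
  rw [Real.norm_eq_abs, show G' t (ψ t) = G t (φ t) from heq ht]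
  exact hbound t ht (φ t)

namespace IsCaratheodorySol

variable {t0 T L s s' x x' : ℝ} {F F' : ℝ → ℝ → ℝ} {f g : ℝ → ℝ}

theorem apply_self (hf : IsCaratheodorySol t0 T F s x f) (hs : s ∈ Icc t0 T) : f s = x := by
  simpa using hf.2 s hs

theorem sub_eq_integral_s9 (hf : IsCaratheodorySol t0 T F s x f) (hs : s ∈ Icc t0 T)
    (hfi : IntegrableOn (fun τ => F τ (f τ)) (Icc t0 T)) {σ r : ℝ} (hσ : σ ∈ Icc t0 T)
    (hr : r ∈ Icc t0 T) : f r - f σ = ∫ τ in σ..r, F τ (f τ) := by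
  have hint : ∀ u ∈ Icc t0 T, IntervalIntegrable (fun τ => F τ (f τ)) volume s u := fun u hu =>
    (hfi.mono_set (uIcc_subset_Icc hs hu)).intervalIntegrable
  rw [hf.2 r hr, hf.2 σ hσ, add_sub_add_left_eq_sub,
    intervalIntegral.integral_interval_sub_left (hint r hr) (hint σ hσ)]

theorem sub_sub_le_mul_integral
    (hf : IsCaratheodorySol t0 T F s x f) (hs : s ∈ Icc t0 T)
    (hfi : IntegrableOn (fun τ => F τ (f τ)) (Icc t0 T))
    (hg : IsCaratheodorySol t0 T F' s' x' g) (hs' : s' ∈ Icc t0 T)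
    (hgi : IntegrableOn (fun τ => F' τ (g τ)) (Icc t0 T))
    (hFF' : ∀ τ ∈ Ioo t0 T, ∀ y, F τ y ≤ F' τ y)
    (hlip : ∀ τ ∈ Ioo t0 T, ∀ y z, F' τ y - F' τ z ≤ L * |y - z|)
    {σ r : ℝ} (hσ : σ ∈ Icc t0 T) (hr : r ∈ Icc t0 T) (hσr : σ ≤ r) :
    f r - f σ - (g r - g σ) ≤ L * ∫ τ in σ..r, |f τ - g τ| := by
  have hsub : uIcc σ r ⊆ Icc t0 T := uIcc_subset_Icc hσ hr
  rw [hf.sub_eq_integral_s9 hs hfi hσ hr, hg.sub_eq_integral_s9 hs' hgi hσ hr,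
    ← intervalIntegral.integral_sub (hfi.mono_set hsub).intervalIntegrable
      (hgi.mono_set hsub).intervalIntegrable, ← intervalIntegral.integral_const_mul]
  refine intervalIntegral.integral_mono_on_of_le_Ioo hσr
    ((hfi.mono_set hsub).intervalIntegrable.sub (hgi.mono_set hsub).intervalIntegrable)
    (continuousOn_const.mul ((hf.1.mono hsub).sub (hg.1.mono hsub)).abs).intervalIntegrable
    fun τ hτ => ?_
  have hτ' : τ ∈ Ioo t0 T := ⟨hσ.1.trans_lt hτ.1, hτ.2.trans_le hr.2⟩
  linarith [hFF' τ hτ' (f τ), hlip τ hτ' (f τ) (g τ)]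

theorem comparison_forward
    (hf : IsCaratheodorySol t0 T F s x f) (hs : s ∈ Icc t0 T)
    (hfi : IntegrableOn (fun τ => F τ (f τ)) (Icc t0 T))
    (hg : IsCaratheodorySol t0 T F' s' x' g) (hs' : s' ∈ Icc t0 T)
    (hgi : IntegrableOn (fun τ => F' τ (g τ)) (Icc t0 T))
    (hFF' : ∀ τ ∈ Ioo t0 T, ∀ y, F τ y ≤ F' τ y)
    (hlip : ∀ τ ∈ Ioo t0 T, ∀ y z, F' τ y - F' τ z ≤ L * |y - z|)
    {a : ℝ} (ha : a ∈ Icc t0 T) (hfg : f a ≤ g a) :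
    ∀ r ∈ Icc a T, f r ≤ g r := by
  have hsub : Icc a T ⊆ Icc t0 T := Icc_subset_Icc_left ha.1
  have h := nonpos_of_le_mul_integral_since_zero (u := fun r => f r - g r) (L := L)
    ((hf.1.mono hsub).sub (hg.1.mono hsub)) (sub_nonpos.2 hfg) fun σ hσ r hr h0 hpos => by
      have key := hf.sub_sub_le_mul_integral hs hfi hg hs' hgi hFF' hlip (hsub hσ)
        (hsub ⟨hσ.1.trans hr.1, hr.2⟩) hr.1
      rw [intervalIntegral.integral_congr fun τ hτ =>
        abs_of_nonneg (hpos τ (by rwa [uIcc_of_le hr.1] at hτ))] at key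
      linarith
  exact fun r hr => sub_nonpos.1 (h r hr)

theorem comparison_backward
    (hf : IsCaratheodorySol t0 T F s x f) (hs : s ∈ Icc t0 T)
    (hfi : IntegrableOn (fun τ => F τ (f τ)) (Icc t0 T))
    (hg : IsCaratheodorySol t0 T F' s' x' g) (hs' : s' ∈ Icc t0 T)
    (hgi : IntegrableOn (fun τ => F' τ (g τ)) (Icc t0 T))
    (hFF' : ∀ τ ∈ Ioo t0 T, ∀ y, F τ y ≤ F' τ y)
    (hlip : ∀ τ ∈ Ioo t0 T, ∀ y z, F' τ y - F' τ z ≤ L * |y - z|)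
    {c : ℝ} (hc : c ∈ Icc t0 T) (hgf : g c ≤ f c) :
    ∀ r ∈ Icc t0 c, g r ≤ f r := by
  have hsub : Icc t0 c ⊆ Icc t0 T := Icc_subset_Icc_right hc.2
  have h := nonpos_of_le_mul_integral_until_zero (u := fun r => g r - f r) (L := L)
    ((hg.1.mono hsub).sub (hf.1.mono hsub)) (sub_nonpos.2 hgf) fun r hr σ hσ h0 hpos => by
      have key := hf.sub_sub_le_mul_integral hs hfi hg hs' hgi hFF' hlip
        (hsub ⟨hσ.1, hσ.2.trans hr.2⟩) (hsub hr) hσ.2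
      rw [intervalIntegral.integral_congr fun τ hτ => (abs_sub_comm _ _).trans
        (abs_of_nonneg (hpos τ (by rwa [uIcc_of_le hσ.2] at hτ)))] at key
      linarith
  exact fun r hr => sub_nonpos.1 (h r hr)

theorem subsingleton_hitting_times {G : ℝ → ℝ → ℝ} {b : ℝ}
    (hf : IsCaratheodorySol t0 T G s x f) (hs : s ∈ Icc t0 T)
    (hfi : IntegrableOn (fun τ => G τ (f τ)) (Icc t0 T))
    (hlip : ∀ τ ∈ Ioo t0 T, ∀ y z, G τ y - G τ z ≤ L * |y - z|)
    (hGb : ∀ τ ∈ Ioo t0 T, G τ b < 0) :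
    {r ∈ Icc t0 T | f r = b}.Subsingleton := by
  have hconst : IsCaratheodorySol t0 T (fun τ y => G τ y - G τ b) s b (fun _ => b) :=
    ⟨continuousOn_const, fun _ _ => by simp⟩
  have hconsti : IntegrableOn (fun τ => G τ b - G τ b) (Icc t0 T) := by simp
  have hGG : ∀ τ ∈ Ioo t0 T, ∀ y, G τ y ≤ G τ y - G τ b := fun τ hτ y => by
    linarith [hGb τ hτ]
  have hlip' : ∀ τ ∈ Ioo t0 T, ∀ y z, G τ y - G τ b - (G τ z - G τ b) ≤ L * |y - z| :=
    fun τ hτ y z => by linarith [hlip τ hτ y z]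
  have hlt : ∀ s₁ ∈ Icc t0 T, ∀ s₂ ∈ Icc t0 T, f s₁ = b → f s₂ = b → ¬ s₁ < s₂ := by
    intro s₁ hs₁ s₂ hs₂ hf₁ hf₂ h12
    have hbelow := hf.comparison_forward hs hfi hconst hs hconsti hGG hlip' hs₁ hf₁.le
    have habove := hf.comparison_backward hs hfi hconst hs hconsti hGG hlip' hs₂ hf₂.ge
    have hneg : 0 < ∫ τ in s₁..s₂, -G τ (f τ) := by
      refine intervalIntegral.intervalIntegral_pos_of_pos_on
        (hfi.mono_set (uIcc_subset_Icc hs₁ hs₂)).intervalIntegrable.neg (fun τ hτ => ?_) h12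
      have hfτ : f τ = b := le_antisymm (hbelow τ ⟨hτ.1.le, hτ.2.le.trans hs₂.2⟩)
        (habove τ ⟨hs₁.1.trans hτ.1.le, hτ.2.le⟩)
      rw [hfτ, neg_pos]
      exact hGb τ ⟨hs₁.1.trans_lt hτ.1, hτ.2.trans_le hs₂.2⟩
    have hstep := hf.sub_eq_integral_s9 hs hfi hs₁ hs₂
    rw [hf₁, hf₂, sub_self] at hstep
    rw [intervalIntegral.integral_neg] at hneg
    linarith
  rintro s₁ ⟨hs₁, hf₁⟩ s₂ ⟨hs₂, hf₂⟩
  exact le_antisymm (not_lt.1 (hlt s₂ hs₂ s₁ hs₁ hf₂ hf₁)) (not_lt.1 (hlt s₁ hs₁ s₂ hs₂ hf₁ hf₂))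

end IsCaratheodorySol

theorem caratheodory_entry_time_right_general
    (t0 T : ℝ) (b : ℝ) (G : ℝ → ℝ → ℝ)
    (hmeas : ∀ x : ℝ, Measurable fun t => G t x)
    (m : ℝ) (hbound : ∀ t ∈ Icc t0 T, ∀ x : ℝ, |G t x| ≤ m)
    (L : ℝ) (hL : 0 ≤ L)
    (hlip : ∀ t ∈ Icc t0 T, ∀ x y : ℝ, |G t x - G t y| ≤ L * |x - y|)
    (Φ : ℝ → ℝ → ℝ → ℝ)
    (hΦ : ∀ s ∈ Icc t0 T, ∀ x : ℝ, IsCaratheodorySol t0 T G s x (fun t => Φ t s x))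
    (hGb : ∀ r ∈ Ioc t0 T, G r b < 0) :
    ∀ t ∈ Ioc t0 T, ∀ x : ℝ, Φ t t0 b ≤ x → x ≤ b →
      ∃! s : ℝ, s ∈ Icc t0 t ∧ Φ s t x = b := by
  intro t ht x hxt hxb
  have htT : t ∈ Icc t0 T := Ioc_subset_Icc_self ht
  have ht0 : t0 ∈ Icc t0 T := ⟨le_rfl, ht.1.le.trans ht.2⟩
  have hGcont : ∀ τ ∈ Icc t0 T, Continuous (G τ) := fun τ hτ =>
    (LipschitzWith.of_dist_le_mul (K := L.toNNReal) fun y z => by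
      rw [Real.coe_toNNReal L hL, Real.dist_eq, Real.dist_eq]; exact hlip τ hτ y z).continuous
  have hint {φ : ℝ → ℝ} (hφ : ContinuousOn φ (Icc t0 T)) :
      IntegrableOn (fun τ => G τ (φ τ)) (Icc t0 T) :=
    integrableOn_Icc_caratheodory_comp hmeas hGcont hbound hφ
  have hlip' : ∀ τ ∈ Ioo t0 T, ∀ y z, G τ y - G τ z ≤ L * |y - z| := fun τ hτ y z =>
    (le_abs_self _).trans (hlip τ (Ioo_subset_Icc_self hτ) y z)
  have hf := hΦ t htT x
  have hg := hΦ t0 ht0 b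
  have hft : Φ t t x = x := hf.apply_self htT
  have hstart : b ≤ Φ t0 t x := by
    simpa [hg.apply_self ht0] using hf.comparison_backward htT (hint hf.1) hg ht0 (hint hg.1)
      (fun _ _ _ => le_rfl) hlip' htT (hft.symm ▸ hxt) t0 ⟨le_rfl, ht.1.le⟩
  obtain ⟨s, hs, hsb⟩ := intermediate_value_Icc' ht.1.le
    (hf.1.mono (Icc_subset_Icc_right ht.2)) ⟨hft.trans_le hxb, hstart⟩
  refine ⟨s, ⟨hs, hsb⟩, fun s' ⟨hs', hs'b⟩ => ?_⟩
  exact hf.subsingleton_hitting_times htT (hint hf.1) hlip'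
    (fun τ hτ => hGb τ (Ioo_subset_Ioc_self hτ)) ⟨Icc_subset_Icc_right ht.2 hs', hs'b⟩
    ⟨Icc_subset_Icc_right ht.2 hs, hsb⟩

/-- Existence and uniqueness of the entry time into the region
`Ω₃ = {(t, x) : Φ(t, t0, b) < x ≤ b}`: if `b > 1` and `G(·, b) < 0` on `(t0, T]`,
then for every `t ∈ (t0, T]` and `Φ(t, t0, b) ≤ x ≤ b` there is a unique
`s ∈ [t0, t]` with `Φ(s, t, x) = b`. -/
theorem caratheodory_entry_time_right
    (t0 T : ℝ) (ht : t0 < T) (b : ℝ) (hb : 1 < b) (G : ℝ → ℝ → ℝ)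
    (hmeas : ∀ x : ℝ, Measurable fun t => G t x)
    (m : ℝ) (hm : 0 ≤ m) (hbound : ∀ t ∈ Icc t0 T, ∀ x : ℝ, |G t x| ≤ m)
    (L : ℝ) (hL : 0 ≤ L)
    (hlip : ∀ t ∈ Icc t0 T, ∀ x y : ℝ, |G t x - G t y| ≤ L * |x - y|)
    (Φ : ℝ → ℝ → ℝ → ℝ)
    (hΦ : ∀ s ∈ Icc t0 T, ∀ x : ℝ, IsCaratheodorySol t0 T G s x (fun t => Φ t s x))
    (hGb : ∀ r ∈ Ioc t0 T, G r b < 0) :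
    ∀ t ∈ Ioc t0 T, ∀ x : ℝ, Φ t t0 b ≤ x → x ≤ b →
      ∃! s : ℝ, s ∈ Icc t0 t ∧ Φ s t x = b :=
  caratheodory_entry_time_right_general t0 T b G hmeas m hbound L hL hlip Φ hΦ hGb
end

section
/- Let a > 0, b > 0, γ ∈ ℝ, s ∈ ℝ, x ∈ (0, b], and let C : ℝ → ℝ be continuous. Define I(t) = ∫_0^t C(τ)·e^(a τ) dτ and Φ(t) = b·(x/b)^(e^(−a(t−s))) · exp( −γ·e^(−a t)·(I(t) − I(s)) ). Then Φ(s) = x and for every t ∈ ℝ, Φ is differentiable at t with Φ'(t) = a·Φ(t)·log(b/Φ(t)) − γ·C(t)·Φ(t). -/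
/-!
Writing `Φ = b · exp F`, the Gompertz equation `Φ' = a Φ log (b / Φ) − γ C Φ` becomes the linear
equation `F' = −a F − γ C`, since `log (b / Φ) = −F`. By variation of constants the solutions of the
latter are `F u = e^{−a u} (K − γ I u)`, and the explicit `Φ` is of this form with
`K = e^{a s} log (x / b) + γ I s`, which also gives `Φ s = b · (x / b) = x`.
-/

open Real

theorem hasDerivAt_exp_neg_mul_mul_sub_integral {a γ K : ℝ} {C : ℝ → ℝ} (hC : Continuous C)
    (t : ℝ) :
    HasDerivAt (fun u => exp (-a * u) * (K - γ * ∫ τ in (0:ℝ)..u, C τ * exp (a * τ)))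
      (-a * (exp (-a * t) * (K - γ * ∫ τ in (0:ℝ)..t, C τ * exp (a * τ))) - γ * C t) t := by
  have hexp : ∀ c : ℝ, HasDerivAt (fun u => exp (c * u)) (c * exp (c * t)) t := fun c => by
    simpa [mul_comm] using ((hasDerivAt_id t).const_mul c).exp
  have hI : HasDerivAt (fun u => ∫ τ in (0:ℝ)..u, C τ * exp (a * τ)) (C t * exp (a * t)) t :=
    (hC.mul (continuous_exp.comp (continuous_const_mul a))).integral_hasStrictDerivAt 0 t
      |>.hasDerivAt
  have hcancel : exp (-a * t) * exp (a * t) = 1 := by rw [← exp_add]; simp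
  exact ((hexp (-a)).mul ((hI.const_mul γ).const_sub K)).congr_deriv
    (by linear_combination -γ * C t * hcancel)

theorem hasDerivAt_const_mul_exp_of_linear {a b c t : ℝ} (hb : b ≠ 0) {F : ℝ → ℝ}
    (hF : HasDerivAt F (-a * F t - c) t) :
    HasDerivAt (fun u => b * exp (F u))
      (a * (b * exp (F t)) * log (b / (b * exp (F t))) - c * (b * exp (F t))) t := by
  have hlog : log (b / (b * exp (F t))) = -F t := by
    rw [div_mul_cancel_left₀ hb, log_inv, log_exp]
  rw [hlog]
  exact (hF.exp.const_mul b).congr_deriv (by ring)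

theorem gompertz_chemo_characteristics_general (a b γ s x : ℝ) (hb : 0 < b)
    (hx0 : 0 < x)
    (C : ℝ → ℝ) (hC : Continuous C)
    (I : ℝ → ℝ) (hI : ∀ t, I t = ∫ τ in (0:ℝ)..t, C τ * Real.exp (a * τ))
    (Φ : ℝ → ℝ)
    (hΦ : ∀ t, Φ t =
      b * Real.exp (Real.exp (-a * (t - s)) * Real.log (x / b)) *
        Real.exp (-γ * Real.exp (-a * t) * (I t - I s))) :
    Φ s = x ∧
      ∀ t : ℝ, HasDerivAt Φ (a * Φ t * Real.log (b / Φ t) - γ * C t * Φ t) t := by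
  refine ⟨?_, fun t => ?_⟩
  · rw [hΦ s, sub_self, mul_zero, exp_zero, one_mul, exp_log (div_pos hx0 hb), sub_self, mul_zero,
      exp_zero, mul_one, mul_div_cancel₀ x hb.ne']
  have hΦ_exp : Φ = fun u =>
      b * exp (exp (-a * u) * (exp (a * s) * log (x / b) + γ * I s - γ * I u)) := by
    funext u
    rw [hΦ u, mul_assoc, ← exp_add, show -a * (u - s) = -a * u + a * s by ring, exp_add (-a * u)]
    ring_nf
  obtain rfl : I = _ := funext hI
  rw [hΦ_exp]
  exact hasDerivAt_const_mul_exp_of_linear hb.ne' (hasDerivAt_exp_neg_mul_mul_sub_integral hC t)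

/-- The explicit characteristic curves of the Gompertzian model with chemotherapy:
with `I t = ∫_0^t C τ e^{a τ} dτ`, the function
`Φ t = b (x/b)^{e^{−a(t−s)}} · exp (−γ e^{−a t} (I t − I s))` satisfies `Φ s = x` and
`Φ' t = a Φ t log (b / Φ t) − γ C t Φ t`. -/
theorem gompertz_chemo_characteristics (a b γ s x : ℝ) (ha : 0 < a) (hb : 0 < b)
    (hx0 : 0 < x) (hxb : x ≤ b)
    (C : ℝ → ℝ) (hC : Continuous C)
    (I : ℝ → ℝ) (hI : ∀ t, I t = ∫ τ in (0:ℝ)..t, C τ * Real.exp (a * τ))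
    (Φ : ℝ → ℝ)
    (hΦ : ∀ t, Φ t =
      b * Real.exp (Real.exp (-a * (t - s)) * Real.log (x / b)) *
        Real.exp (-γ * Real.exp (-a * t) * (I t - I s))) :
    Φ s = x ∧
      ∀ t : ℝ, HasDerivAt Φ (a * Φ t * Real.log (b / Φ t) - γ * C t * Φ t) t :=
  gompertz_chemo_characteristics_general a b γ s x hb hx0 C hC I hI Φ hΦ
end

section
/- Let t0 < T, 1 < b, let G : [t0,T] × [1,b] → ℝ be continuous with continuous partial derivative ∂_x G, let β : [1,b] → ℝ be continuous, f : [t0,T] → ℝ be continuous, and let u : [t0,T] × [1,b] → ℝ be continuously differentiable and satisfy: (i) ∂_t u(t,x) + ∂_x (G(t,x)·u(t,x)) = 0 on [t0,T] × [1,b]; (ii) G(t,b)·u(t,b) = 0 for all t ∈ [t0,T]; (iii) G(t,1)·u(t,1) = ∫_1^b β(x)·u(t,x) dx + f(t) for all t ∈ [t0,T]. Then for every t ∈ [t0,T], ∫_1^b |u(t,x)| dx ≤ e^(‖β‖_∞·(T − t0)) · ( ∫_{t0}^T |f(s)| ds + ∫_1^b |u(t0,x)| dx ), where ‖β‖_∞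 = sup_{x ∈ [1,b]} |β(x)|. -/
/-!
Regularise `|·|` by `sε(r) = √(r² + ε²)`. Along the equation,
`d/dt ∫ sε(u) = ∫ (u / sε(u)) ∂ₜu = -∫ (u / sε(u)) ∂ₓ(G u)`, and since
`(u / sε(u)) ∂ₓ(G u) = ∂ₓ(G sε(u)) - ∂ₓG · ε² / sε(u)` this is the net boundary flux
`G sε(u)|ₓ₌₁ - G sε(u)|ₓ₌b` up to `O(ε)`. The zero-flux condition kills the term at `b`, the
nonlocal condition bounds the one at `1` by `‖β‖_∞ ∫ |u| + |f|`, Gronwall's inequality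
integrates the resulting differential inequality, and `ε → 0` gives the estimate.
-/

open MeasureTheory Set Filter Topology

noncomputable def smoothAbs (ε r : ℝ) : ℝ := √(r ^ 2 + ε ^ 2)

section SmoothAbs

variable {ε : ℝ}

theorem smoothAbs_pos (hε : 0 < ε) (r : ℝ) : 0 < smoothAbs ε r :=
  Real.sqrt_pos.2 (by positivity)

theorem sq_smoothAbs (ε r : ℝ) : smoothAbs ε r ^ 2 = r ^ 2 + ε ^ 2 :=
  Real.sq_sqrt (by positivity)

theorem abs_le_smoothAbs (ε r : ℝ) : |r| ≤ smoothAbs ε r :=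
  Real.abs_le_sqrt (by nlinarith [sq_nonneg ε])

theorem smoothAbs_le_abs_add (hε : 0 ≤ ε) (r : ℝ) : smoothAbs ε r ≤ |r| + ε :=
  Real.sqrt_le_iff.2 ⟨by positivity, by nlinarith [abs_nonneg r, sq_abs r]⟩

theorem sq_div_smoothAbs_le (hε : 0 < ε) (r : ℝ) : ε ^ 2 / smoothAbs ε r ≤ ε := by
  have hε_le : ε ≤ smoothAbs ε r := Real.le_sqrt_of_sq_le (by nlinarith [sq_nonneg r])
  rw [div_le_iff₀ (smoothAbs_pos hε r)]
  nlinarith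

theorem mul_smoothAbs_le (hε : 0 ≤ ε) (g r : ℝ) : g * smoothAbs ε r ≤ |g * r| + |g| * ε :=
  calc g * smoothAbs ε r ≤ |g| * smoothAbs ε r :=
        mul_le_mul_of_nonneg_right (le_abs_self g) (Real.sqrt_nonneg _)
    _ ≤ |g| * (|r| + ε) := mul_le_mul_of_nonneg_left (smoothAbs_le_abs_add hε r) (abs_nonneg g)
    _ = |g * r| + |g| * ε := by rw [abs_mul]; ring

theorem hasDerivAt_smoothAbs (hε : 0 < ε) (r : ℝ) :
    HasDerivAt (smoothAbs ε) (r / smoothAbs ε r) r := by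
  have h : HasDerivAt (smoothAbs ε) _ r :=
    ((hasDerivAt_pow 2 r).add_const (ε ^ 2)).sqrt (by positivity)
  refine h.congr_deriv ?_
  simp only [smoothAbs, Nat.cast_ofNat, pow_one, Nat.add_one_sub_one]
  ring

theorem contDiff_smoothAbs (hε : 0 < ε) : ContDiff ℝ 1 (smoothAbs ε) :=
  ((contDiff_id.pow 2).add contDiff_const).sqrt fun r => by positivity

end SmoothAbs

theorem div_smoothAbs_mul_deriv_mul {g v : ℝ → ℝ} {ε x : ℝ} (hε : 0 < ε)
    (hg : DifferentiableAt ℝ g x) (hv : DifferentiableAt ℝ v x) :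
    v x / smoothAbs ε (v x) * deriv (fun y => g y * v y) x =
      deriv (fun y => g y * smoothAbs ε (v y)) x - deriv g x * (ε ^ 2 / smoothAbs ε (v x)) := by
  have hs := (smoothAbs_pos hε (v x)).ne'
  have hgs : HasDerivAt (fun y => g y * smoothAbs ε (v y)) _ x :=
    hg.hasDerivAt.mul ((hasDerivAt_smoothAbs hε (v x)).comp x hv.hasDerivAt)
  rw [deriv_fun_mul hg hv, hgs.deriv]
  field_simp
  linear_combination (-deriv g x) * sq_smoothAbs ε (v x)

theorem integral_div_smoothAbs_mul_le_boundary_flux {g v w : ℝ → ℝ} {a b C ε : ℝ}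
    (hab : a ≤ b) (hε : 0 < ε) (hg : ContDiff ℝ 1 g) (hv : ContDiff ℝ 1 v)
    (hC : ∀ x ∈ Icc a b, |deriv g x| ≤ C)
    (hw : ∀ x ∈ Icc a b, w x = -deriv (fun y => g y * v y) x) :
    ∫ x in a..b, v x / smoothAbs ε (v x) * w x ≤
      |g a * v a| + |g b * v b| + ε * (C * (b - a) + |g a| + |g b|) := by
  have hs : ContDiff ℝ 1 fun x => smoothAbs ε (v x) := (contDiff_smoothAbs hε).comp hv
  have hgs : ContDiff ℝ 1 fun x => g x * smoothAbs ε (v x) := hg.mul hs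
  have hdiss : Continuous fun x => deriv g x * (ε ^ 2 / smoothAbs ε (v x)) :=
    (hg.continuous_deriv le_rfl).mul
      (continuous_const.div hs.continuous fun x => (smoothAbs_pos hε (v x)).ne')
  have hdiss_le :
      (∫ x in a..b, deriv g x * (ε ^ 2 / smoothAbs ε (v x))) ≤ ∫ _ in a..b, C * ε := by
    refine intervalIntegral.integral_mono_on hab (hdiss.intervalIntegrable a b)
      intervalIntegrable_const fun x hx => ?_
    have hq := sq_div_smoothAbs_le hε (v x)
    have hq0 := (div_pos (pow_pos hε 2) (smoothAbs_pos hε (v x))).le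
    calc deriv g x * (ε ^ 2 / smoothAbs ε (v x)) ≤ |deriv g x| * (ε ^ 2 / smoothAbs ε (v x)) :=
          mul_le_mul_of_nonneg_right (le_abs_self _) hq0
      _ ≤ C * ε := mul_le_mul (hC x hx) hq hq0 ((abs_nonneg _).trans (hC x hx))
  have hint : ∫ x in a..b, v x / smoothAbs ε (v x) * w x =
      (∫ x in a..b, deriv g x * (ε ^ 2 / smoothAbs ε (v x))) -
        (g b * smoothAbs ε (v b) - g a * smoothAbs ε (v a)) := by
    rw [← intervalIntegral.integral_deriv_eq_sub (fun x _ => hgs.differentiable one_ne_zero x)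
      ((hgs.continuous_deriv le_rfl).intervalIntegrable a b),
      ← intervalIntegral.integral_sub (hdiss.intervalIntegrable a b)
        ((hgs.continuous_deriv le_rfl).intervalIntegrable a b)]
    refine intervalIntegral.integral_congr fun x hx => ?_
    rw [uIcc_of_le hab] at hx
    rw [hw x hx, mul_neg, div_smoothAbs_mul_deriv_mul hε (hg.differentiable one_ne_zero x)
      (hv.differentiable one_ne_zero x), neg_sub]
  have hflux_a := mul_smoothAbs_le hε.le (g a) (v a)
  have hflux_b := mul_smoothAbs_le hε.le (-g b) (v b)
  simp only [neg_mul, abs_neg] at hflux_b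
  rw [intervalIntegral.integral_const, smul_eq_mul] at hdiss_le
  rw [hint]
  nlinarith

section PartialDeriv

variable {E : Type*} [NormedAddCommGroup E] [NormedSpace ℝ E] {V : ℝ → ℝ → E}

theorem hasDerivAt_fst_of_differentiableAt {t x : ℝ}
    (hV : DifferentiableAt ℝ (fun p : ℝ × ℝ => V p.1 p.2) (t, x)) :
    HasDerivAt (fun τ => V τ x) (fderiv ℝ (fun p : ℝ × ℝ => V p.1 p.2) (t, x) (1, 0)) t := by
  have hcurve : HasDerivAt (fun τ : ℝ => ((τ, x) : ℝ × ℝ)) (1, 0) t :=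
    (hasDerivAt_id t).prodMk (hasDerivAt_const t x)
  exact hV.hasFDerivAt.comp_hasDerivAt t hcurve

theorem continuous_deriv_fst_of_contDiff (hV : ContDiff ℝ 1 (fun p : ℝ × ℝ => V p.1 p.2)) :
    Continuous fun p : ℝ × ℝ => deriv (fun τ => V τ p.2) p.1 := by
  have hV' := hV.differentiable one_ne_zero
  have h : (fun p : ℝ × ℝ => deriv (fun τ => V τ p.2) p.1) =
      fun p => fderiv ℝ (fun p : ℝ × ℝ => V p.1 p.2) p (1, 0) := by
    funext p
    exact (hasDerivAt_fst_of_differentiableAt (hV' (p.1, p.2))).deriv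
  rw [h]
  exact (hV.continuous_fderiv one_ne_zero).clm_apply continuous_const

theorem hasDerivAt_intervalIntegral_of_contDiff
    (hV : ContDiff ℝ 1 (fun p : ℝ × ℝ => V p.1 p.2)) (a b t : ℝ) :
    HasDerivAt (fun τ => ∫ x in a..b, V τ x) (∫ x in a..b, deriv (fun τ => V τ x) t) t := by
  have hV' := continuous_deriv_fst_of_contDiff hV
  obtain ⟨C, hC⟩ := ((isCompact_closedBall t 1).prod (isCompact_uIcc (a := a) (b := b)))
    |>.exists_bound_of_continuousOn hV'.continuousOn
  have hslice : ∀ τ, Continuous (V τ) := fun τ =>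
    hV.continuous.comp (continuous_const.prodMk continuous_id)
  refine (intervalIntegral.hasDerivAt_integral_of_dominated_loc_of_deriv_le
    (bound := fun _ => C) (Metric.closedBall_mem_nhds t one_pos)
    (Filter.Eventually.of_forall fun τ => (hslice τ).aestronglyMeasurable)
    ((hslice t).intervalIntegrable a b)
    (hV'.comp (continuous_const.prodMk continuous_id)).aestronglyMeasurable
    (Filter.Eventually.of_forall fun x hx τ hτ => hC (τ, x) ⟨hτ, uIoc_subset_uIcc hx⟩)
    intervalIntegrable_const
    (Filter.Eventually.of_forall fun x _ τ _ =>
      (hasDerivAt_fst_of_differentiableAt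
        (hV.differentiable one_ne_zero _)).differentiableAt.hasDerivAt)).2

theorem le_exp_mul_of_hasDerivAt_le {φ φ' g : ℝ → ℝ} {M a t : ℝ} (hat : a ≤ t) (hM : 0 ≤ M)
    (hg : Continuous g) (hg_nonneg : ∀ s ∈ Icc a t, 0 ≤ g s)
    (hφ : ∀ τ ∈ Icc a t, HasDerivAt φ (φ' τ) τ)
    (hφ' : ∀ τ ∈ Ioo a t, φ' τ ≤ M * φ τ + g τ) :
    φ t ≤ Real.exp (M * (t - a)) * (φ a + ∫ s in a..t, g s) := by
  set w : ℝ → ℝ := fun s => Real.exp (-(M * (s - a)))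
  have hw : ∀ s, HasDerivAt w (-M * w s) s := fun s => by
    simpa [w, mul_comm] using (((hasDerivAt_id s).sub_const a).const_mul M).neg.exp
  have hwg : Continuous fun s => w s * g s := by fun_prop
  set ψ : ℝ → ℝ := fun τ => w τ * φ τ - ∫ s in a..τ, w s * g s
  have hψ : ∀ τ ∈ Icc a t, HasDerivAt ψ (w τ * (φ' τ - M * φ τ - g τ)) τ := fun τ hτ =>
    (((hw τ).mul (hφ τ hτ)).sub (hwg.integral_hasStrictDerivAt a τ).hasDerivAt).congr_deriv
      (by ring)
  have hψ_anti : AntitoneOn ψ (Icc a t) := by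
    apply antitoneOn_of_deriv_nonpos (convex_Icc a t)
    · exact fun τ hτ => (hψ τ hτ).continuousAt.continuousWithinAt
    · rw [interior_Icc]
      exact fun τ hτ => (hψ τ (Ioo_subset_Icc_self hτ)).differentiableAt.differentiableWithinAt
    · rw [interior_Icc]
      intro τ hτ
      rw [(hψ τ (Ioo_subset_Icc_self hτ)).deriv]
      exact mul_nonpos_of_nonneg_of_nonpos (Real.exp_pos _).le (by linarith [hφ' τ hτ])
  have hψ_le : w t * φ t ≤ φ a + ∫ s in a..t, w s * g s := by
    have h := hψ_anti ⟨le_rfl, hat⟩ ⟨hat, le_rfl⟩ hat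
    simp only [ψ, w, sub_self, mul_zero, neg_zero, Real.exp_zero, one_mul,
      intervalIntegral.integral_same, sub_zero] at h
    linarith
  have hwg_le : (∫ s in a..t, w s * g s) ≤ ∫ s in a..t, g s := by
    refine intervalIntegral.integral_mono_on hat (hwg.intervalIntegrable a t)
      (hg.intervalIntegrable a t) fun s hs => ?_
    refine mul_le_of_le_one_left (hg_nonneg s hs) (Real.exp_le_one_iff.2 ?_)
    nlinarith [hs.1]
  have hw_inv : Real.exp (M * (t - a)) * w t = 1 := by
    rw [← Real.exp_add]; simp
  calc φ t = Real.exp (M * (t - a)) * (w t * φ t) := by rw [← mul_assoc, hw_inv, one_mul]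
    _ ≤ Real.exp (M * (t - a)) * (φ a + ∫ s in a..t, g s) :=
      mul_le_mul_of_nonneg_left (by linarith) (Real.exp_pos _).le

theorem abs_integral_mul_le_mul_integral_abs {β v : ℝ → ℝ} {a b M : ℝ} (hab : a ≤ b)
    (hv : IntervalIntegrable v volume a b) (hβ : ∀ x ∈ Icc a b, |β x| ≤ M) :
    |∫ x in a..b, β x * v x| ≤ M * ∫ x in a..b, |v x| := by
  rw [← intervalIntegral.integral_const_mul]
  refine intervalIntegral.norm_integral_le_of_norm_le (f := fun x => β x * v x) hab
    (Filter.Eventually.of_forall fun x hx => ?_) (hv.abs.const_mul M)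
  rw [Real.norm_eq_abs, abs_mul]
  exact mul_le_mul_of_nonneg_right (hβ x (Ioc_subset_Icc_self hx)) (abs_nonneg _)

theorem abs_le_iSup_abs {β : ℝ → ℝ} (hβ : Continuous β) {a b x : ℝ} (hx : x ∈ Icc a b) :
    |β x| ≤ ⨆ y : Icc a b, |β y| :=
  le_ciSup (isCompact_range (by fun_prop : Continuous fun y : Icc a b => |β y|)).bddAbove ⟨x, hx⟩

theorem exists_abs_le_on_Icc_prod {F : ℝ → ℝ → ℝ} (hF : Continuous fun p : ℝ × ℝ => F p.1 p.2)
    (t0 T a b : ℝ) : ∃ K, ∀ τ ∈ Icc t0 T, ∀ x ∈ Icc a b, |F τ x| ≤ K :=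
  let ⟨K, hK⟩ := (isCompact_Icc.prod isCompact_Icc).exists_bound_of_continuousOn hF.continuousOn
  ⟨K, fun τ hτ x hx => hK (τ, x) ⟨hτ, hx⟩⟩

section Transport

variable {G u : ℝ → ℝ → ℝ} {f : ℝ → ℝ} {t0 T a b t M K C : ℝ}

theorem integral_smoothAbs_le_of_transport {ε : ℝ} (hab : a ≤ b) (hε : 0 < ε) (hM : 0 ≤ M)
    (hf : Continuous f) (hG : ∀ τ ∈ Icc t0 T, ContDiff ℝ 1 (G τ))
    (hGK : ∀ τ ∈ Icc t0 T, ∀ x ∈ Icc a b, |G τ x| ≤ K)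
    (hGC : ∀ τ ∈ Icc t0 T, ∀ x ∈ Icc a b, |deriv (G τ) x| ≤ C)
    (hu : ContDiff ℝ 1 fun p : ℝ × ℝ => u p.1 p.2)
    (hpde : ∀ τ ∈ Icc t0 T, ∀ x ∈ Icc a b,
      deriv (fun s => u s x) τ + deriv (fun y => G τ y * u τ y) x = 0)
    (hbc_b : ∀ τ ∈ Icc t0 T, G τ b * u τ b = 0)
    (hbc_a : ∀ τ ∈ Icc t0 T, |G τ a * u τ a| ≤ M * (∫ x in a..b, |u τ x|) + |f τ|)
    (ht : t ∈ Icc t0 T) :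
    ∫ x in a..b, smoothAbs ε (u t x) ≤ Real.exp (M * (t - t0)) *
      ((∫ x in a..b, smoothAbs ε (u t0 x)) +
        ∫ s in t0..t, (|f s| + ε * (C * (b - a) + 2 * K))) := by
  have hslice : ∀ τ, ContDiff ℝ 1 (u τ) := fun τ =>
    hu.comp (contDiff_const.prodMk contDiff_id)
  have hsu : ContDiff ℝ 1 fun p : ℝ × ℝ => smoothAbs ε (u p.1 p.2) :=
    (contDiff_smoothAbs hε).comp hu
  refine le_exp_mul_of_hasDerivAt_le (g := fun s => |f s| + ε * (C * (b - a) + 2 * K)) ht.1 hM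
    (by fun_prop) (fun s _ => ?_)
    (fun τ _ => hasDerivAt_intervalIntegral_of_contDiff (V := fun τ x => smoothAbs ε (u τ x))
      hsu a b τ) fun τ hτ => ?_
  · have ht0 : t0 ∈ Icc t0 T := ⟨le_rfl, ht.1.trans ht.2⟩
    have hK := (abs_nonneg _).trans (hGK t0 ht0 a ⟨le_rfl, hab⟩)
    have hC := (abs_nonneg _).trans (hGC t0 ht0 a ⟨le_rfl, hab⟩)
    have hba : 0 ≤ b - a := sub_nonneg.2 hab
    positivity
  have hτ' : τ ∈ Icc t0 T := ⟨hτ.1.le, hτ.2.le.trans ht.2⟩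
  have hchain : ∀ x, deriv (fun s => smoothAbs ε (u s x)) τ =
      u τ x / smoothAbs ε (u τ x) * deriv (fun s => u s x) τ := fun x => by
    exact ((hasDerivAt_smoothAbs hε (u τ x)).comp τ (hasDerivAt_fst_of_differentiableAt
      (hu.differentiable one_ne_zero (τ, x))).differentiableAt.hasDerivAt).deriv
  have hL1 : M * ∫ x in a..b, |u τ x| ≤ M * ∫ x in a..b, smoothAbs ε (u τ x) :=
    mul_le_mul_of_nonneg_left (intervalIntegral.integral_mono_on hab
      ((hslice τ).continuous.abs.intervalIntegrable a b)
      (((contDiff_smoothAbs hε).comp (hslice τ)).continuous.intervalIntegrable a b)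
      fun x _ => abs_le_smoothAbs ε (u τ x)) hM
  have hKa := hGK τ hτ' a ⟨le_rfl, hab⟩
  have hKb := hGK τ hτ' b ⟨hab, le_rfl⟩
  simp only [hchain]
  calc _ ≤ |G τ a * u τ a| + |G τ b * u τ b| + ε * (C * (b - a) + |G τ a| + |G τ b|) :=
        integral_div_smoothAbs_mul_le_boundary_flux hab hε (hG τ hτ') (hslice τ) (hGC τ hτ')
          fun x hx => eq_neg_of_add_eq_zero_left (hpde τ hτ' x hx)
    _ ≤ M * (∫ x in a..b, smoothAbs ε (u τ x)) + (|f τ| + ε * (C * (b - a) + 2 * K)) := by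
        rw [hbc_b τ hτ', abs_zero]
        nlinarith [hbc_a τ hτ']


theorem integral_abs_le_of_transport (hab : a ≤ b) (hM : 0 ≤ M)
    (hf : Continuous f) (hG : ∀ τ ∈ Icc t0 T, ContDiff ℝ 1 (G τ))
    (hGK : ∀ τ ∈ Icc t0 T, ∀ x ∈ Icc a b, |G τ x| ≤ K)
    (hGC : ∀ τ ∈ Icc t0 T, ∀ x ∈ Icc a b, |deriv (G τ) x| ≤ C)
    (hu : ContDiff ℝ 1 fun p : ℝ × ℝ => u p.1 p.2)
    (hpde : ∀ τ ∈ Icc t0 T, ∀ x ∈ Icc a b,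
      deriv (fun s => u s x) τ + deriv (fun y => G τ y * u τ y) x = 0)
    (hbc_b : ∀ τ ∈ Icc t0 T, G τ b * u τ b = 0)
    (hbc_a : ∀ τ ∈ Icc t0 T, |G τ a * u τ a| ≤ M * (∫ x in a..b, |u τ x|) + |f τ|)
    (ht : t ∈ Icc t0 T) :
    ∫ x in a..b, |u t x| ≤
      Real.exp (M * (t - t0)) * ((∫ x in a..b, |u t0 x|) + ∫ s in t0..t, |f s|) := by
  have hslice : ∀ τ, Continuous (u τ) := fun τ =>
    hu.continuous.comp (continuous_const.prodMk continuous_id)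
  set E := Real.exp (M * (t - t0))
  set L := (b - a) + (C * (b - a) + 2 * K) * (t - t0)
  have hε : ∀ ε > 0, ∫ x in a..b, |u t x| ≤
      E * ((∫ x in a..b, |u t0 x|) + (∫ s in t0..t, |f s|) + ε * L) := fun ε hε =>
    calc ∫ x in a..b, |u t x| ≤ ∫ x in a..b, smoothAbs ε (u t x) :=
          intervalIntegral.integral_mono_on hab ((hslice t).abs.intervalIntegrable a b)
            (((contDiff_smoothAbs hε).continuous.comp (hslice t)).intervalIntegrable a b)
            fun x _ => abs_le_smoothAbs ε (u t x)
      _ ≤ E * ((∫ x in a..b, smoothAbs ε (u t0 x)) +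
            ∫ s in t0..t, (|f s| + ε * (C * (b - a) + 2 * K))) :=
          integral_smoothAbs_le_of_transport hab hε hM hf hG hGK hGC hu hpde hbc_b hbc_a ht
      _ ≤ E * ((∫ x in a..b, (|u t0 x| + ε)) +
            ∫ s in t0..t, (|f s| + ε * (C * (b - a) + 2 * K))) := by
          gcongr
          exact intervalIntegral.integral_mono_on hab
            (((contDiff_smoothAbs hε).continuous.comp (hslice t0)).intervalIntegrable a b)
            (((hslice t0).abs.add continuous_const).intervalIntegrable a b)
            fun x _ => smoothAbs_le_abs_add hε.le (u t0 x)
      _ = E * ((∫ x in a..b, |u t0 x|) + (∫ s in t0..t, |f s|) + ε * L) := by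
          rw [intervalIntegral.integral_add ((hslice t0).abs.intervalIntegrable a b)
              intervalIntegrable_const,
            intervalIntegral.integral_add (hf.abs.intervalIntegrable t0 t) intervalIntegrable_const,
            intervalIntegral.integral_const, intervalIntegral.integral_const, smul_eq_mul,
            smul_eq_mul]
          ring
  have hlim : Tendsto (fun ε => E * ((∫ x in a..b, |u t0 x|) + (∫ s in t0..t, |f s|) + ε * L))
      (𝓝[>] 0) (𝓝 (E * ((∫ x in a..b, |u t0 x|) + ∫ s in t0..t, |f s|))) := by
    refine tendsto_nhdsWithin_of_tendsto_nhds (Continuous.tendsto' ?_ 0 _ (by simp))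
    fun_prop
  exact ge_of_tendsto hlim (eventually_nhdsWithin_of_forall hε)

end Transport

theorem transport_L1_estimate_general
    (t0 T b : ℝ) (hb : 1 < b)
    (G : ℝ → ℝ → ℝ)
    (hGcont : Continuous fun p : ℝ × ℝ => G p.1 p.2)
    (hGdiff : ∀ t : ℝ, Differentiable ℝ (G t))
    (hGxcont : Continuous fun p : ℝ × ℝ => deriv (G p.1) p.2)
    (β : ℝ → ℝ) (hβ : Continuous β)
    (f : ℝ → ℝ) (hf : Continuous f)
    (u : ℝ → ℝ → ℝ)
    (hu : ContDiff ℝ 1 (fun p : ℝ × ℝ => u p.1 p.2))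
    (hpde : ∀ t ∈ Icc t0 T, ∀ x ∈ Icc (1:ℝ) b,
      deriv (fun τ => u τ x) t + deriv (fun y => G t y * u t y) x = 0)
    (hbc_b : ∀ t ∈ Icc t0 T, G t b * u t b = 0)
    (hbc_1 : ∀ t ∈ Icc t0 T,
      G t 1 * u t 1 = (∫ x in (1:ℝ)..b, β x * u t x) + f t) :
    ∀ t ∈ Icc t0 T,
      (∫ x in (1:ℝ)..b, |u t x|) ≤
        Real.exp ((⨆ x : Icc (1:ℝ) b, |β ↑x|) * (T - t0)) *
          ((∫ s in t0..T, |f s|) + ∫ x in (1:ℝ)..b, |u t0 x|) := by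
  intro t ht_mem
  set M := ⨆ x : Icc (1:ℝ) b, |β ↑x|
  have hβM : ∀ x ∈ Icc 1 b, |β x| ≤ M := fun x hx => abs_le_iSup_abs hβ hx
  have hM : 0 ≤ M := (abs_nonneg _).trans (hβM 1 ⟨le_rfl, hb.le⟩)
  have hG : ∀ τ ∈ Icc t0 T, ContDiff ℝ 1 (G τ) := fun τ _ => contDiff_one_iff_deriv.2
    ⟨hGdiff τ, hGxcont.comp (continuous_const.prodMk continuous_id)⟩
  have hflux_1 : ∀ τ ∈ Icc t0 T, |G τ 1 * u τ 1| ≤ M * (∫ x in (1:ℝ)..b, |u τ x|) + |f τ| :=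
    fun τ hτ => by
      rw [hbc_1 τ hτ]
      refine (abs_add_le _ _).trans (add_le_add_left (abs_integral_mul_le_mul_integral_abs hb.le
        ((hu.continuous.comp (continuous_const.prodMk continuous_id)).intervalIntegrable 1 b)
        hβM) _)
  obtain ⟨K, hGK⟩ := exists_abs_le_on_Icc_prod hGcont t0 T 1 b
  obtain ⟨C, hGC⟩ :=
    exists_abs_le_on_Icc_prod (F := fun τ x => deriv (G τ) x) hGxcont t0 T 1 b
  calc ∫ x in (1:ℝ)..b, |u t x|
      ≤ Real.exp (M * (t - t0)) * ((∫ x in (1:ℝ)..b, |u t0 x|) + ∫ s in t0..t, |f s|) :=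
        integral_abs_le_of_transport hb.le hM hf hG hGK hGC hu hpde hbc_b hflux_1 ht_mem
    _ ≤ Real.exp (M * (T - t0)) * ((∫ s in t0..T, |f s|) + ∫ x in (1:ℝ)..b, |u t0 x|) := by
        rw [add_comm (∫ x in (1:ℝ)..b, |u t0 x|)]
        refine mul_le_mul (Real.exp_le_exp.2 ?_) (add_le_add_left ?_ _) ?_ (Real.exp_pos _).le
        · nlinarith [ht_mem.2]
        · exact intervalIntegral.integral_mono_interval le_rfl ht_mem.1 ht_mem.2
            (Filter.Eventually.of_forall fun s => abs_nonneg (f s)) (hf.abs.intervalIntegrable _ _)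
        · exact add_nonneg (intervalIntegral.integral_nonneg ht_mem.1 fun s _ => abs_nonneg _)
            (intervalIntegral.integral_nonneg hb.le fun x _ => abs_nonneg _)

/-- A priori `L¹` estimate for the metastatic transport model: if `u` solves
`∂ₜ u + ∂ₓ (G u) = 0` on `[t0, T] × [1, b]` with the zero-flux condition at `x = b`
and the nonlocal boundary condition `G(t,1) u(t,1) = ∫_1^b β(x) u(t,x) dx + f(t)`
at `x = 1`, then
`∫_1^b |u(t,x)| dx ≤ e^{‖β‖_∞ (T − t0)} (∫_{t0}^T |f| + ∫_1^b |u(t0, ·)|)`. -/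
theorem transport_L1_estimate
    (t0 T b : ℝ) (ht : t0 < T) (hb : 1 < b)
    (G : ℝ → ℝ → ℝ)
    (hGcont : Continuous fun p : ℝ × ℝ => G p.1 p.2)
    (hGdiff : ∀ t : ℝ, Differentiable ℝ (G t))
    (hGxcont : Continuous fun p : ℝ × ℝ => deriv (G p.1) p.2)
    (β : ℝ → ℝ) (hβ : Continuous β)
    (f : ℝ → ℝ) (hf : Continuous f)
    (u : ℝ → ℝ → ℝ)
    (hu : ContDiff ℝ 1 (fun p : ℝ × ℝ => u p.1 p.2))
    (hpde : ∀ t ∈ Icc t0 T, ∀ x ∈ Icc (1:ℝ) b,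
      deriv (fun τ => u τ x) t + deriv (fun y => G t y * u t y) x = 0)
    (hbc_b : ∀ t ∈ Icc t0 T, G t b * u t b = 0)
    (hbc_1 : ∀ t ∈ Icc t0 T,
      G t 1 * u t 1 = (∫ x in (1:ℝ)..b, β x * u t x) + f t) :
    ∀ t ∈ Icc t0 T,
      (∫ x in (1:ℝ)..b, |u t x|) ≤
        Real.exp ((⨆ x : Icc (1:ℝ) b, |β ↑x|) * (T - t0)) *
          ((∫ s in t0..T, |f s|) + ∫ x in (1:ℝ)..b, |u t0 x|) :=
  transport_L1_estimate_general t0 T b hb G hGcont hGdiff hGxcont β hβ f hf u hu hpde hbc_b hbc_1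
end PartialDeriv
end
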